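/- arXiv:2511.11302 — 4 statements merged into one kernel-verified Lean document; each statement's English description precedes it below -/
import Mathlib

section
/- For every K > 0 there exists δ₀ > 0 such that for every δ ∈ (0, δ₀] there exists an integer n₀ with the following property: if G is an oriented graph on n ≥ n₀ vertices with σ₊₋(G) ≥ (3n+2)/4 and (A,B,C,D) is a (δ,K)-nice partition of G, then G contains two special arcs for (A,B,C,D) that share no endpoint. -/
open Set

section Defs

variable {V : Type*}

/-- Out-degree of `v` in the digraph `G`. -/
noncomputable def outdeg (G : V → V → Prop) (v : V) : ℕ := {u | G v u}.ncard

/-- In-degree of `v` in the digraph `G`. -/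
noncomputable def indeg (G : V → V → Prop) (v : V) : ℕ := {u | G u v}.ncard

/-- Number of out-neighbours of `v` inside the set `X`. -/
noncomputable def outdegOn (G : V → V → Prop) (v : V) (X : Set V) : ℕ := {u ∈ X | G v u}.ncard

/-- Number of in-neighbours of `v` inside the set `X`. -/
noncomputable def indegOn (G : V → V → Prop) (v : V) (X : Set V) : ℕ := {u ∈ X | G u v}.ncard

/-- Number of arcs with tail in `X` and head in `Y`. -/
noncomputable def arcsBetween (G : V → V → Prop) (X Y : Set V) : ℕ :=
  {p : V × V | p.1 ∈ X ∧ p.2 ∈ Y ∧ G p.1 p.2}.ncard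

/-- `G` is an oriented graph: for distinct `x, y` at most one of the arcs `xy`, `yx`
is present (this also rules out loops). -/
def IsOrientedGraph (G : V → V → Prop) : Prop := ∀ x y, G x y → ¬ G y x

/-- `σ₊₋(G) ≥ r`: for every ordered pair of distinct vertices `x, y` with `xy` not an arc,
`d⁺(x) + d⁻(y) ≥ r`. -/
def SigmaGE (G : V → V → Prop) (r : ℝ) : Prop :=
  ∀ x y : V, x ≠ y → ¬ G x y → r ≤ (outdeg G x : ℝ) + (indeg G y : ℝ)

/-- An antidirected Hamilton cycle in a digraph `G` on `n` vertices: a cyclic ordering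
of all vertices such that between consecutive vertices exactly one arc is present
and the directions of these arcs alternate around the cycle. -/
def HasAntidirectedHamCycle (n : ℕ) (G : V → V → Prop) : Prop :=
  ∃ f : ZMod n ≃ V, ∀ i : ZMod n,
    Xor' (G (f i) (f (i + 1))) (G (f (i + 1)) (f i)) ∧
    (G (f i) (f (i + 1)) ↔ G (f (i + 2)) (f (i + 1)))

/-- A directed Hamilton cycle in a digraph `G` on `n` vertices. -/
def HasDirectedHamCycle (n : ℕ) (G : V → V → Prop) : Prop :=
  ∃ f : ZMod n ≃ V, ∀ i : ZMod n, G (f i) (f (i + 1))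

/-- `G` contains every orientation of a Hamilton cycle: for every assignment of a
direction to each edge of the `n`-cycle there is a cyclic ordering of all vertices
realizing it. -/
def ContainsEveryOrientationHamCycle (n : ℕ) (G : V → V → Prop) : Prop :=
  ∀ σ : ZMod n → Bool, ∃ f : ZMod n ≃ V, ∀ i : ZMod n,
    if σ i = true then G (f i) (f (i + 1)) else G (f (i + 1)) (f i)

/-- `G` (a digraph on `n` vertices) is a robust `(ν,τ)`-outexpander. -/
def RobustOutexpander (n : ℕ) (G : V → V → Prop) (ν τ : ℝ) : Prop :=
  ∀ S : Set V, τ * n < (S.ncard : ℝ) → (S.ncard : ℝ) < (1 - τ) * n →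
    (S.ncard : ℝ) + ν * n ≤ (({v : V | ν * n ≤ (indegOn G v S : ℝ)}).ncard : ℝ)

/-- An `(ε,K)`-nice partition `(A,B,C,D)` of an oriented graph `G` on `n` vertices. -/
def NicePartition (n : ℕ) (G : V → V → Prop) (ε K : ℝ) (A B C D : Set V) : Prop :=
  A ∪ B ∪ C ∪ D = Set.univ ∧
  Disjoint A B ∧ Disjoint A C ∧ Disjoint A D ∧
  Disjoint B C ∧ Disjoint B D ∧ Disjoint C D ∧
  A.ncard ≤ C.ncard ∧
  |((A.ncard : ℝ) + (C.ncard : ℝ)) - n / 2| ≤ K * ε * n ∧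
  |(B.ncard : ℝ) - n / 4| ≤ K * ε * n ∧
  |(D.ncard : ℝ) - n / 4| ≤ K * ε * n ∧
  (arcsBetween G (A ∪ D) (C ∪ D) : ℝ) ≤ ε ^ 2 * n ^ 2

/-- `v` is a `δ`-good vertex for the partition `(A,B,C,D)`. -/
def GoodVertex (n : ℕ) (G : V → V → Prop) (δ : ℝ) (A B C D : Set V) (v : V) : Prop :=
  (v ∈ A → (A.ncard : ℝ) / 2 - δ * n ≤ (outdegOn G v A : ℝ) ∧
           (A.ncard : ℝ) / 2 - δ * n ≤ (indegOn G v A : ℝ) ∧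
           (B.ncard : ℝ) - δ * n ≤ (outdegOn G v B : ℝ) ∧
           (D.ncard : ℝ) - δ * n ≤ (indegOn G v D : ℝ)) ∧
  (v ∈ B → (C.ncard : ℝ) - δ * n ≤ (outdegOn G v C : ℝ) ∧
           (A.ncard : ℝ) - δ * n ≤ (indegOn G v A : ℝ)) ∧
  (v ∈ C → (C.ncard : ℝ) / 2 - δ * n ≤ (outdegOn G v C : ℝ) ∧
           (C.ncard : ℝ) / 2 - δ * n ≤ (indegOn G v C : ℝ) ∧
           (D.ncard : ℝ) - δ * n ≤ (outdegOn G v D : ℝ) ∧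
           (B.ncard : ℝ) - δ * n ≤ (indegOn G v B : ℝ)) ∧
  (v ∈ D → (C.ncard : ℝ) / 2 - δ * n ≤ (outdegOn G v B : ℝ) ∧
           (A.ncard : ℝ) / 2 - δ * n ≤ (indegOn G v B : ℝ) ∧
           (A.ncard : ℝ) - δ * n ≤ (outdegOn G v A : ℝ) ∧
           (C.ncard : ℝ) - δ * n ≤ (indegOn G v C : ℝ))

/-- A special arc for the partition `(A,B,C,D)`: tail in `A ∪ D` and head in `C ∪ D`,
or tail in `B ∪ C` and head in `A ∪ B`. -/
def SpecialArc (G : V → V → Prop) (A B C D : Set V) (u v : V) : Prop :=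
  G u v ∧ ((u ∈ A ∪ D ∧ v ∈ C ∪ D) ∨ (u ∈ B ∪ C ∧ v ∈ A ∪ B))

/-- `p 0, p 1, …, p (d-1)` is an antidirected path in `G`: the vertices are distinct,
between consecutive vertices exactly one arc is present, and consecutive arcs
alternate in direction. -/
def IsAntidirectedPathOn (G : V → V → Prop) (d : ℕ) (p : ℕ → V) : Prop :=
  (∀ i j, i < d → j < d → p i = p j → i = j) ∧
  (∀ i, i + 1 < d → Xor' (G (p i) (p (i + 1))) (G (p (i + 1)) (p i))) ∧
  (∀ i, i + 2 < d → (G (p i) (p (i + 1)) ↔ G (p (i + 2)) (p (i + 1))))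

/-- A `D`-proper path for the partition `(A,B,C,D)` and parameter `δ`: an antidirected
path of order at most 10 whose first and last arcs point away from / towards the
interior as prescribed (`v₁v₂` and `v_{d-1}v_d` are arcs) and whose end-vertices are
`δ`-good vertices of `D`. -/
def IsDProperPath (n : ℕ) (G : V → V → Prop) (δ : ℝ) (A B C D : Set V)
    (d : ℕ) (p : ℕ → V) : Prop :=
  IsAntidirectedPathOn G d p ∧ 2 ≤ d ∧ d ≤ 10 ∧
  G (p 0) (p 1) ∧ G (p (d - 2)) (p (d - 1)) ∧
  p 0 ∈ D ∧ p (d - 1) ∈ D ∧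
  GoodVertex n G δ A B C D (p 0) ∧ GoodVertex n G δ A B C D (p (d - 1))

end Defs

/-!
Suppose no two special arcs are vertex-disjoint. Then the special arcs form a star or lie in a
triangle, so they all lie inside a set `X` of at most three vertices except those through a set
`Y ⊆ X` (`Y = {w}` for a star centred at `w`, `Y = ∅` for a triangle). Outside `X` every arc goes
from `A ∪ D` to `A ∪ B` or from `B ∪ C` to `C ∪ D`, up to arcs into `Y`. Hence `D \ X` is
independent and its vertices have total degree at most `n - |D|`, which bounds `σ₊₋` by
`n - |D|`; likewise for `B`. Inside `A \ X` there is a non-arc `xy` with `d⁺(x) + d⁻(y)` at most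
`|A| + |B| + |D| - 1`, and likewise inside `C \ X`. Up to the contribution of `X` and `Y`, the
four bounds add up to `4 σ₊₋ ≤ 3n + 1`, contradicting `σ₊₋ ≥ (3n + 2)/4`. When `|A \ X| ≤ 1`
the pair in `A` is replaced by the non-arcs `xy`, `yz` with `x ∈ D`, `y ∈ C`, `z ∈ A ∪ B`.
-/

section Counting

variable {V : Type*}

theorem ncard_union_union_le (P Q R : Set V) :
    (P ∪ Q ∪ R).ncard ≤ P.ncard + Q.ncard + R.ncard :=
  (ncard_union_le _ _).trans (Nat.add_le_add_right (ncard_union_le _ _) _)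

theorem ncard_union_union_union_le (P Q R S : Set V) :
    (P ∪ Q ∪ R ∪ S).ncard ≤ P.ncard + Q.ncard + R.ncard + S.ncard :=
  (ncard_union_le _ _).trans (Nat.add_le_add_right (ncard_union_union_le _ _ _) _)

theorem ncard_union_inter_le (P Q Y : Set V) :
    ((P ∪ Q) ∩ Y).ncard ≤ (P ∩ Y).ncard + (Q ∩ Y).ncard :=
  union_inter_distrib_right P Q Y ▸ ncard_union_le _ _

theorem ncard_triple_le (u v z : V) : ({u, v, z} : Set V).ncard ≤ 3 :=
  (ncard_insert_le _ _).trans <| Nat.add_le_add_right ((ncard_insert_le _ _).trans (by simp)) _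


theorem ncard_inter_triple_le_two {A : Set V} {u v z : V} (h : u ∉ A ∨ v ∉ A) :
    (A ∩ {u, v, z}).ncard ≤ 2 := by
  rcases h with h | h
  · refine (ncard_le_ncard (t := {v, z}) ?_).trans ((ncard_insert_le _ _).trans (by simp))
    rintro a ⟨ha, rfl | rfl | rfl⟩
    exacts [absurd ha h, Or.inl rfl, Or.inr rfl]
  · refine (ncard_le_ncard (t := {u, z}) ?_).trans ((ncard_insert_le _ _).trans (by simp))
    rintro a ⟨ha, rfl | rfl | rfl⟩
    exacts [Or.inl rfl, absurd ha h, Or.inr rfl]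

end Counting

section Oriented

variable {V : Type*} [Finite V] {G : V → V → Prop}

theorem outdeg_add_indeg_le_ncard (hG : IsOrientedGraph G) {x : V} {S : Set V}
    (hout : {u | G x u} ⊆ S) (hin : {u | G u x} ⊆ S) :
    outdeg G x + indeg G x ≤ S.ncard := by
  rw [outdeg, indeg, ← ncard_union_eq (s := {u | G x u}) (t := {u | G u x})
    (disjoint_left.2 fun u h₁ h₂ => hG x u h₁ h₂)]
  exact ncard_le_ncard (union_subset hout hin)

theorem outdeg_add_indeg_lt_ncard (hG : IsOrientedGraph G) {x : V} {S : Set V} (hx : x ∈ S)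
    (hout : {u | G x u} ⊆ S) (hin : {u | G u x} ⊆ S) :
    outdeg G x + indeg G x < S.ncard := by
  have hloop : ∀ {u}, G x u ∨ G u x → u ∉ ({x} : Set V) := by
    rintro u hu rfl
    exact hu.elim (fun h => hG u u h h) (fun h => hG u u h h)
  refine (outdeg_add_indeg_le_ncard hG (S := S \ {x}) ?_ ?_).trans_lt
    (ncard_sdiff_singleton_lt_of_mem hx)
  · exact fun u hu => ⟨hout hu, hloop (Or.inl hu)⟩
  · exact fun u hu => ⟨hin hu, hloop (Or.inr hu)⟩

theorem exists_not_adj_outdegOn_add_indegOn_lt (hG : IsOrientedGraph G) {S : Set V}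
    (hS : 2 ≤ S.ncard) :
    ∃ x ∈ S, ∃ y ∈ S, x ≠ y ∧ ¬G x y ∧ outdegOn G x S + indegOn G y S < S.ncard := by
  have hloc : ∀ y ∈ S, outdegOn G y S + indegOn G y S < S.ncard := by
    intro y hy
    rw [outdegOn, indegOn, ← ncard_union_eq (disjoint_left.2 fun u h₁ h₂ => hG y u h₁.2 h₂.2)]
    refine (ncard_le_ncard (t := S \ {y}) ?_).trans_lt (ncard_sdiff_singleton_lt_of_mem hy)
    rintro u (⟨hu, h⟩ | ⟨hu, h⟩) <;> exact ⟨hu, by rintro rfl; exact hG u u h h⟩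
  -- a vertex of minimum out-degree inside `S` either misses some arc, or dominates `S`
  obtain ⟨x, hx, hmin⟩ :=
    S.exists_min_image (outdegOn G · S) S.toFinite (nonempty_of_ncard_ne_zero (s := S) (by omega))
  by_cases hdom : ∃ y ∈ S, y ≠ x ∧ ¬G x y
  · obtain ⟨y, hy, hyx, hxy⟩ := hdom
    exact ⟨x, hx, y, hy, hyx.symm, hxy, (Nat.add_le_add_right (hmin y hy) _).trans_lt (hloc y hy)⟩
  · push Not at hdom
    obtain ⟨y, hy, hyx⟩ := exists_ne_of_one_lt_ncard (s := S) (by omega) x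
    have hin : indegOn G x S = 0 := by
      rw [indegOn, ncard_eq_zero, eq_empty_iff_forall_notMem]
      rintro u ⟨hu, hux⟩
      exact hG u x hux (hdom u hu fun h => hG u u (h ▸ hux) (h ▸ hux))
    refine ⟨y, hy, x, hx, hyx, fun h => hG x y (hdom y hy hyx) h, ?_⟩
    rw [hin, add_zero]
    exact (Nat.le_add_right _ _).trans_lt (hloc y hy)

end Oriented

theorem SigmaGE.le_of_not_adj {V : Type*} {G : V → V → Prop} {r : ℝ} (hσ : SigmaGE G r)
    {x y : V} (hxy : x ≠ y) (h₁ : ¬G x y) (h₂ : ¬G y x) {m : ℕ} (hx : outdeg G x + indeg G x ≤ m)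
    (hy : outdeg G y + indeg G y ≤ m) : r ≤ m := by
  have := hσ x y hxy h₁
  have := hσ y x hxy.symm h₂
  have hx' : ((outdeg G x + indeg G x : ℕ) : ℝ) ≤ m := by exact_mod_cast hx
  have hy' : ((outdeg G y + indeg G y : ℕ) : ℝ) ≤ m := by exact_mod_cast hy
  push_cast at hx' hy'
  linarith

theorem star_or_triangle_of_pairwise_meet {V : Type*} [Nonempty V] {P : V → V → Prop}
    (hirr : ∀ x, ¬P x x)
    (hmeet : ∀ p q p' q', P p q → P p' q' → p = p' ∨ p = q' ∨ q = p' ∨ q = q') :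
    (∃ w, ∀ p q, P p q → p = w ∨ q = w) ∨
      ∃ u v z, P u v ∧ ∀ p q, P p q → p ∈ ({u, v, z} : Set V) ∧ q ∈ ({u, v, z} : Set V) := by
  classical
  by_cases hex : ∃ u v, P u v
  swap
  · push Not at hex
    exact Or.inl ⟨Classical.arbitrary V, fun p q h => (hex p q h).elim⟩
  obtain ⟨u, v, huv⟩ := hex
  by_cases hu : ∀ p q, P p q → p = u ∨ q = u
  · exact Or.inl ⟨u, hu⟩
  by_cases hv : ∀ p q, P p q → p = v ∨ q = v
  · exact Or.inl ⟨v, hv⟩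
  push Not at hu hv
  obtain ⟨p, q, hpq, hpu, hqu⟩ := hu
  obtain ⟨p', q', hpq', hpv, hqv⟩ := hv
  -- a pair avoiding `u` must contain `v`; its other end `z` completes the triangle
  refine Or.inr ⟨u, v, if p = v then q else p, huv, fun a b hab => ?_⟩
  have := hmeet _ _ _ _ hab huv
  have := hmeet _ _ _ _ hab hpq
  have := hmeet _ _ _ _ hab hpq'
  have := hmeet _ _ _ _ huv hpq
  have := hmeet _ _ _ _ huv hpq'
  have := hmeet _ _ _ _ hpq hpq'
  have := hirr a
  have := hirr p
  have := hirr p'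
  simp only [mem_insert_iff, mem_singleton_iff]
  split_ifs <;> grind

section Partition

variable {V : Type*}

structure IsFourPartition (A B C D : Set V) : Prop where
  cover : A ∪ B ∪ C ∪ D = univ
  disjoint_ab : Disjoint A B
  disjoint_ac : Disjoint A C
  disjoint_ad : Disjoint A D
  disjoint_bc : Disjoint B C
  disjoint_bd : Disjoint B D
  disjoint_cd : Disjoint C D

structure SpecialArcsConfined (G : V → V → Prop) (A B C D X Y : Set V) : Prop where
  subset : Y ⊆ X
  inside_or_meets : ∀ p q, SpecialArc G A B C D p q → (p ∈ X ∧ q ∈ X) ∨ p ∈ Y ∨ q ∈ Y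

variable {G : V → V → Prop} {A B C D X Y : Set V}

theorem specialArc_rotate {p q : V} :
    SpecialArc G C D A B p q ↔ SpecialArc G A B C D p q := by
  simp only [SpecialArc, mem_union]
  tauto

theorem IsFourPartition.rotate (h : IsFourPartition A B C D) : IsFourPartition C D A B where
  cover := by rw [← h.cover]; ext; simp only [mem_union]; tauto
  disjoint_ab := h.disjoint_cd
  disjoint_ac := h.disjoint_ac.symm
  disjoint_ad := h.disjoint_bc.symm
  disjoint_bc := h.disjoint_ad.symm
  disjoint_bd := h.disjoint_bd.symm
  disjoint_cd := h.disjoint_ab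

theorem IsFourPartition.ncard_inter_add [Finite V] (h : IsFourPartition A B C D) (S : Set V) :
    (A ∩ S).ncard + (B ∩ S).ncard + (C ∩ S).ncard + (D ∩ S).ncard = S.ncard := by
  have hS : A ∩ S ∪ B ∩ S ∪ C ∩ S ∪ D ∩ S = S := by
    simp only [← union_inter_distrib_right, h.cover, univ_inter]
  have hd : ∀ {P Q : Set V}, Disjoint P Q → Disjoint (P ∩ S) (Q ∩ S) :=
    fun hPQ => hPQ.mono inter_subset_left inter_subset_left
  conv_rhs => rw [← hS]
  rw [ncard_union_eq, ncard_union_eq, ncard_union_eq]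
  · exact hd h.disjoint_ab
  · exact disjoint_union_left.2 ⟨hd h.disjoint_ac, hd h.disjoint_bc⟩
  · exact disjoint_union_left.2 ⟨disjoint_union_left.2 ⟨hd h.disjoint_ad, hd h.disjoint_bd⟩,
      hd h.disjoint_cd⟩

theorem IsFourPartition.notMem_or_notMem_of_specialArc (hP : IsFourPartition A B C D) {p q : V}
    (h : SpecialArc G A B C D p q) : p ∉ A ∨ q ∉ A := by
  by_contra! hpq
  rcases h.2 with ⟨-, hq | hq⟩ | ⟨hp | hp, -⟩
  · exact disjoint_left.1 hP.disjoint_ac hpq.2 hq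
  · exact disjoint_left.1 hP.disjoint_ad hpq.2 hq
  · exact disjoint_left.1 hP.disjoint_ab hpq.1 hp
  · exact disjoint_left.1 hP.disjoint_ac hpq.1 hp

theorem SpecialArcsConfined.rotate (h : SpecialArcsConfined G A B C D X Y) :
    SpecialArcsConfined G C D A B X Y :=
  ⟨h.subset, fun p q hpq => h.inside_or_meets p q (specialArc_rotate.1 hpq)⟩

namespace SpecialArcsConfined

variable {p q x : V}

theorem head_mem (h : SpecialArcsConfined G A B C D X Y)
    (hpq : SpecialArc G A B C D p q) (hp : p ∉ X) : q ∈ Y := by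
  rcases h.inside_or_meets p q hpq with hX | hY | hY
  · exact absurd hX.1 hp
  · exact absurd (h.subset hY) hp
  · exact hY

theorem tail_mem (h : SpecialArcsConfined G A B C D X Y)
    (hpq : SpecialArc G A B C D p q) (hq : q ∉ X) : p ∈ Y := by
  rcases h.inside_or_meets p q hpq with hX | hY | hY
  · exact absurd hX.2 hq
  · exact hY
  · exact absurd (h.subset hY) hq

theorem out_subset (h : SpecialArcsConfined G A B C D X Y)
    (hP : IsFourPartition A B C D) (hx : x ∈ A ∪ D) (hxX : x ∉ X) :
    {u | G x u} ⊆ A ∪ B ∪ ((C ∪ D) ∩ Y) := by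
  intro u hu
  by_cases hAB : u ∈ A ∪ B
  · exact Or.inl hAB
  have hCD : u ∈ C ∪ D := by
    have := hP.cover ▸ mem_univ u
    simp only [mem_union] at this hAB ⊢
    tauto
  exact Or.inr ⟨hCD, h.head_mem ⟨hu, Or.inl ⟨hx, hCD⟩⟩ hxX⟩

theorem in_subset (h : SpecialArcsConfined G A B C D X Y)
    (hP : IsFourPartition A B C D) (hx : x ∈ A ∪ B) (hxX : x ∉ X) :
    {u | G u x} ⊆ A ∪ D ∪ ((B ∪ C) ∩ Y) := by
  intro u hu
  by_cases hAD : u ∈ A ∪ D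
  · exact Or.inl hAD
  have hBC : u ∈ B ∪ C := by
    have := hP.cover ▸ mem_univ u
    simp only [mem_union] at this hAD ⊢
    tauto
  exact Or.inr ⟨hBC, h.tail_mem ⟨hu, Or.inr ⟨hBC, hx⟩⟩ hxX⟩

end SpecialArcsConfined

end Partition

namespace SpecialArcsConfined

variable {V : Type*} [Finite V] {G : V → V → Prop} {A B C D X Y : Set V} {r : ℝ}

theorem sigma_le_of_D (h : SpecialArcsConfined G A B C D X Y) (hG : IsOrientedGraph G)
    (hσ : SigmaGE G r) (hP : IsFourPartition A B C D) (hD : 2 ≤ (D \ X).ncard) :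
    r ≤ (A.ncard + B.ncard + C.ncard + (D ∩ Y).ncard : ℕ) := by
  obtain ⟨x, y, hx, hy, hxy⟩ := (one_lt_ncard_iff).1 hD
  have hindep : ∀ x ∈ D \ X, ∀ y ∈ D \ X, ¬G x y := fun x hx y hy hxy =>
    hy.2 (h.subset (h.head_mem ⟨hxy, Or.inl ⟨Or.inr hx.1, Or.inr hy.1⟩⟩ hx.2))
  have hdeg : ∀ v ∈ D \ X,
      outdeg G v + indeg G v ≤ A.ncard + B.ncard + C.ncard + (D ∩ Y).ncard := by
    intro v hv
    refine (outdeg_add_indeg_le_ncard hG ?_ ?_).trans (ncard_union_union_union_le A B C (D ∩ Y))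
    · refine (h.out_subset hP (Or.inr hv.1) hv.2).trans ?_
      intro u hu
      simp only [mem_union, mem_inter_iff] at hu ⊢
      tauto
    · refine (h.rotate.in_subset hP.rotate (Or.inr hv.1) hv.2).trans ?_
      intro u hu
      simp only [mem_union, mem_inter_iff] at hu ⊢
      tauto
  exact hσ.le_of_not_adj hxy (hindep x hx y hy) (hindep y hy x hx) (hdeg x hx) (hdeg y hy)

theorem sigma_add_one_le_of_A (h : SpecialArcsConfined G A B C D X Y) (hG : IsOrientedGraph G)
    (hσ : SigmaGE G r) (hP : IsFourPartition A B C D) (hA : 2 ≤ (A \ X).ncard) :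
    r + 1 ≤ (A.ncard + (A ∩ X).ncard + B.ncard + D.ncard
      + ((C ∪ D) ∩ Y).ncard + ((B ∪ C) ∩ Y).ncard : ℕ) := by
  obtain ⟨x, hx, y, hy, hxy, hnxy, hlt⟩ := exists_not_adj_outdegOn_add_indegOn_lt hG hA
  have hout : outdeg G x ≤
      outdegOn G x (A \ X) + (A ∩ X).ncard + B.ncard + ((C ∪ D) ∩ Y).ncard := by
    refine (ncard_le_ncard ?_).trans (ncard_union_union_union_le _ _ _ _)
    intro u hu
    have := h.out_subset hP (Or.inl hx.1) hx.2 hu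
    by_cases huX : u ∈ X <;> simp_all
  have hin : indeg G y ≤
      indegOn G y (A \ X) + (A ∩ X).ncard + D.ncard + ((B ∪ C) ∩ Y).ncard := by
    refine (ncard_le_ncard ?_).trans (ncard_union_union_union_le _ _ _ _)
    intro u hu
    have := h.in_subset hP (Or.inl hy.1) hy.2 hu
    by_cases huX : u ∈ X <;> simp_all
  have hsplit := ncard_inter_add_ncard_sdiff_eq_ncard A X
  calc r + 1 ≤ ((outdeg G x + indeg G y + 1 : ℕ) : ℝ) := by
        push_cast; linarith [hσ x y hxy hnxy]
    _ ≤ _ := Nat.cast_le.2 (by omega)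

theorem two_mul_sigma_add_one_le_of_small_A (h : SpecialArcsConfined G A B C D X Y)
    (hG : IsOrientedGraph G) (hσ : SigmaGE G r) (hP : IsFourPartition A B C D)
    (hA : (A \ X).ncard ≤ 1) (hB : (B \ X).Nonempty) (hC : (C \ X).Nonempty)
    (hD : (D \ X).Nonempty) :
    2 * r + 1 ≤ (A.ncard + (A ∩ X).ncard + 2 * B.ncard + C.ncard + 2 * D.ncard
      + ((C ∪ D) ∩ Y).ncard + (A ∩ Y).ncard + ((B ∪ C) ∩ Y).ncard : ℕ) := by
  obtain ⟨x, hx⟩ := hD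
  obtain ⟨y, hy⟩ := hC
  obtain ⟨z, hz, hAz⟩ : ∃ z ∈ (A ∪ B) \ X, A \ X ⊆ {z} := by
    rcases (A \ X).eq_empty_or_nonempty with hA0 | ⟨a, ha⟩
    · obtain ⟨b, hb⟩ := hB
      exact ⟨b, ⟨Or.inr hb.1, hb.2⟩, hA0 ▸ empty_subset _⟩
    · refine ⟨a, ⟨Or.inl ha.1, ha.2⟩, fun a' ha' => ?_⟩
      exact (ncard_le_one (s := A \ X)).1 hA a' ha' a ha
  have hxy : ¬G x y := fun hxy =>
    hy.2 (h.subset (h.head_mem ⟨hxy, Or.inl ⟨Or.inr hx.1, Or.inl hy.1⟩⟩ hx.2))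
  have hyz : ¬G y z := fun hyz =>
    hz.2 (h.subset (h.head_mem ⟨hyz, Or.inr ⟨Or.inr hy.1, hz.1⟩⟩ hy.2))
  have hx_ne : x ≠ y := fun e => disjoint_left.1 hP.disjoint_cd hy.1 (e ▸ hx.1)
  have hy_ne : y ≠ z := by
    rintro rfl
    rcases hz.1 with hzA | hzB
    · exact disjoint_left.1 hP.disjoint_ac hzA hy.1
    · exact disjoint_left.1 hP.disjoint_bc hzB hy.1
  have hout : outdeg G x ≤ A.ncard + B.ncard + ((C ∪ D) ∩ Y).ncard :=
    (ncard_le_ncard (h.out_subset hP (Or.inr hx.1) hx.2)).trans (ncard_union_union_le _ _ _)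
  have hdeg : outdeg G y + indeg G y < B.ncard + C.ncard + D.ncard + (A ∩ Y).ncard := by
    refine (outdeg_add_indeg_lt_ncard hG (Or.inl (Or.inl (Or.inr hy.1))) ?_ ?_).trans_le
      (ncard_union_union_union_le _ _ _ _)
    · intro u hu
      have := h.rotate.out_subset hP.rotate (Or.inl hy.1) hy.2 hu
      simp only [mem_union, mem_inter_iff] at this ⊢
      tauto
    · intro u hu
      have := h.rotate.in_subset hP.rotate (Or.inl hy.1) hy.2 hu
      simp only [mem_union, mem_inter_iff] at this ⊢
      tauto
  have hin : indeg G z ≤ (A ∩ X).ncard + D.ncard + ((B ∪ C) ∩ Y).ncard := by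
    refine (ncard_le_ncard ?_).trans (ncard_union_union_le _ _ _)
    intro u hu
    rcases h.in_subset hP hz.1 hz.2 hu with (huA | huD) | huY
    · by_cases huX : u ∈ X
      · exact Or.inl (Or.inl ⟨huA, huX⟩)
      · obtain rfl : u = z := hAz ⟨huA, huX⟩
        exact absurd hu (hG u u hu)
    · exact Or.inl (Or.inr huD)
    · exact Or.inr huY
  calc 2 * r + 1 ≤ ((outdeg G x + indeg G y + (outdeg G y + indeg G z) + 1 : ℕ) : ℝ) := by
        push_cast; linarith [hσ x y hx_ne hxy, hσ y z hy_ne hyz]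
    _ ≤ _ := Nat.cast_le.2 (by omega)

end SpecialArcsConfined

section Main

variable {V : Type*} [Finite V] {G : V → V → Prop} {A B C D X Y : Set V}

-- `hXY` and `hAXY` bound the contributions of `X` and `Y` to the degree bounds
-- in the cases `2 ≤ |A \ X|` and `|A \ X| ≤ 1` respectively.
theorem not_specialArcsConfined (hG : IsOrientedGraph G)
    (hσ : SigmaGE G ((3 * Nat.card V + 2) / 4)) (hP : IsFourPartition A B C D)
    (hB : 2 ≤ (B \ X).ncard) (hC : 2 ≤ (C \ X).ncard) (hD : 2 ≤ (D \ X).ncard)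
    (hXY : X.ncard + 2 * Y.ncard ≤ 3) (hAXY : (A ∩ X).ncard + 2 * Y.ncard ≤ 2 + (A ∩ Y).ncard) :
    ¬SpecialArcsConfined G A B C D X Y := by
  intro h
  have hn := hP.ncard_inter_add univ
  simp only [inter_univ, ncard_univ] at hn
  have hX := hP.ncard_inter_add X
  have hY := hP.ncard_inter_add Y
  have hBY : (B ∩ Y).ncard ≤ (B ∩ X).ncard := ncard_le_ncard (inter_subset_inter_right _ h.subset)
  have hDY : (D ∩ Y).ncard ≤ (D ∩ X).ncard := ncard_le_ncard (inter_subset_inter_right _ h.subset)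
  have hAB := ncard_union_inter_le A B Y
  have hBC := ncard_union_inter_le B C Y
  have hCD := ncard_union_inter_le C D Y
  have hDA := ncard_union_inter_le D A Y
  have hσD := h.sigma_le_of_D hG hσ hP hD
  have hσB := h.rotate.sigma_le_of_D hG hσ hP.rotate hB
  push_cast at hσD hσB
  rify at hn hX hY hBY hDY hAB hBC hCD hDA hXY hAXY
  rcases le_or_gt 2 (A \ X).ncard with hA | hA
  · have hσA := h.sigma_add_one_le_of_A hG hσ hP hA
    have hσC := h.rotate.sigma_add_one_le_of_A hG hσ hP.rotate hC
    push_cast at hσA hσC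
    linarith
  · have hσA := h.two_mul_sigma_add_one_le_of_small_A hG hσ hP (by omega)
      (nonempty_of_ncard_ne_zero (by omega)) (nonempty_of_ncard_ne_zero (by omega))
      (nonempty_of_ncard_ne_zero (by omega))
    push_cast at hσA
    linarith

theorem exists_disjoint_specialArcs (hG : IsOrientedGraph G)
    (hσ : SigmaGE G ((3 * Nat.card V + 2) / 4)) (hP : IsFourPartition A B C D) (hB : 5 ≤ B.ncard) (hC : 5 ≤ C.ncard) (hD : 5 ≤ D.ncard) :
    ∃ u₁ v₁ u₂ v₂ : V,
      SpecialArc G A B C D u₁ v₁ ∧ SpecialArc G A B C D u₂ v₂ ∧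
      u₁ ≠ u₂ ∧ u₁ ≠ v₂ ∧ v₁ ≠ u₂ ∧ v₁ ≠ v₂ := by
  by_contra hcon
  have hmeet : ∀ p q p' q', SpecialArc G A B C D p q → SpecialArc G A B C D p' q' →
      p = p' ∨ p = q' ∨ q = p' ∨ q = q' := by
    intro p q p' q' h h'
    by_contra! hne
    exact hcon ⟨p, q, p', q', h, h', hne.1, hne.2.1, hne.2.2.1, hne.2.2.2⟩
  obtain ⟨b, -⟩ := nonempty_of_ncard_ne_zero (s := B) (by omega)
  have : Nonempty V := ⟨b⟩
  have hsize : ∀ {S T : Set V}, 5 ≤ S.ncard → T.ncard ≤ 3 → 2 ≤ (S \ T).ncard :=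
    fun {S T} hS hT => by have := le_ncard_sdiff T S; omega
  rcases star_or_triangle_of_pairwise_meet (fun x hx => hG x x hx.1 hx.1) hmeet with
    ⟨w, hw⟩ | ⟨u, v, z, huv, hT⟩
  · have hw1 : ({w} : Set V).ncard ≤ 3 := by simp
    exact not_specialArcsConfined (X := {w}) (Y := {w}) hG hσ hP
      (hsize hB hw1) (hsize hC hw1) (hsize hD hw1) (by simp) (by simp [add_comm])
      ⟨subset_rfl, fun p q hpq => Or.inr (hw p q hpq)⟩
  · have hT3 := ncard_triple_le u v z
    exact not_specialArcsConfined (X := {u, v, z}) (Y := ∅) hG hσ hP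
      (hsize hB hT3) (hsize hC hT3) (hsize hD hT3) (by simpa using hT3)
      (by simpa using ncard_inter_triple_le_two (hP.notMem_or_notMem_of_specialArc huv))
      ⟨empty_subset _, fun p q hpq => Or.inl (hT p q hpq)⟩

end Main

theorem NicePartition.five_le_ncard {V : Type*} {n : ℕ} {G : V → V → Prop} {ε K : ℝ}
    {A B C D : Set V} (h : NicePartition n G ε K A B C D) (hε : K * ε ≤ 1 / 8) (hn : 40 ≤ n) :
    5 ≤ B.ncard ∧ 5 ≤ C.ncard ∧ 5 ≤ D.ncard := by
  obtain ⟨-, -, -, -, -, -, -, hAC, hACn, hBn, hDn, -⟩ := h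
  have hn' : (40 : ℝ) ≤ n := by exact_mod_cast hn
  have hKεn : K * ε * n ≤ n / 8 := by nlinarith
  have hAC' : (A.ncard : ℝ) ≤ C.ncard := by exact_mod_cast hAC
  have hACn := (abs_le.1 hACn).1
  have hBn := (abs_le.1 hBn).1
  have hDn := (abs_le.1 hDn).1
  have h5 : ∀ S : Set V, (5 : ℝ) ≤ S.ncard → 5 ≤ S.ncard := fun S h => by exact_mod_cast h
  exact ⟨h5 B (by linarith), h5 C (by linarith), h5 D (by linarith)⟩

theorem NicePartition.isFourPartition {V : Type*} {n : ℕ} {G : V → V → Prop} {ε K : ℝ}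
    {A B C D : Set V} (h : NicePartition n G ε K A B C D) : IsFourPartition A B C D :=
  ⟨h.1, h.2.1, h.2.2.1, h.2.2.2.1, h.2.2.2.2.1, h.2.2.2.2.2.1, h.2.2.2.2.2.2.1⟩

/-- For every `K > 0` there exists `δ₀ > 0` such that for every `δ ∈ (0, δ₀]`
there exists an integer `n₀` such that: if `G` is an oriented graph on `n ≥ n₀` vertices
with `σ₊₋(G) ≥ (3n+2)/4` and `(A,B,C,D)` is a `(δ,K)`-nice partition of `G`, then `G`
contains two special arcs for `(A,B,C,D)` that share no endpoint. -/
theorem stmt9 (K : ℝ) (hK : 0 < K) :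
    ∃ δ₀ : ℝ, 0 < δ₀ ∧ ∀ δ : ℝ, 0 < δ → δ ≤ δ₀ →
    ∃ n₀ : ℕ, ∀ (n : ℕ) (V : Type) [Fintype V] (G : V → V → Prop),
      n₀ ≤ n → Fintype.card V = n → IsOrientedGraph G →
      SigmaGE G ((3 * n + 2) / 4) →
      ∀ A B C D : Set V, NicePartition n G δ K A B C D →
      ∃ u₁ v₁ u₂ v₂ : V,
        SpecialArc G A B C D u₁ v₁ ∧ SpecialArc G A B C D u₂ v₂ ∧
        u₁ ≠ u₂ ∧ u₁ ≠ v₂ ∧ v₁ ≠ u₂ ∧ v₁ ≠ v₂ := by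
  refine ⟨1 / (8 * K), by positivity, fun δ _ hδ => ⟨40, ?_⟩⟩
  intro n V _ G hn hcard hG hσ A B C D hnice
  have hKδ : K * δ ≤ 1 / 8 :=
    calc K * δ ≤ K * (1 / (8 * K)) := by gcongr
      _ = 1 / 8 := by field_simp
  obtain ⟨hB, hC, hD⟩ := hnice.five_le_ncard hKδ hn
  rw [← hcard, ← Nat.card_eq_fintype_card] at hσ
  exact exists_disjoint_specialArcs hG hσ hnice.isFourPartition hB hC hD
end

section
/- Let G be a digraph on n ≥ 2 vertices. If σ₊₋(G) ≥ n, then G contains a directed Hamilton cycle. -/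
open Set

set_option linter.unusedSectionVars false
set_option maxHeartbeats 1000000

namespace WoodallProof

variable {V : Type*} [Fintype V] [DecidableEq V]



/-- A cycle of length `s` in the digraph `G`, given as a function `ℕ → V`
injective on `[0, s)`, with consecutive arcs and a wrap-around arc. -/
def IsCycFn (G : V → V → Prop) (s : ℕ) (f : ℕ → V) : Prop :=
  (∀ a < s, ∀ b < s, f a = f b → a = b) ∧
  (∀ t, t + 1 < s → G (f t) (f (t + 1))) ∧
  G (f (s - 1)) (f 0)

def HasCyc (G : V → V → Prop) (s : ℕ) : Prop := ∃ f, IsCycFn G s f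

lemma hasCyc_two_le {G : V → V → Prop} (hirr : Irreflexive G) {s : ℕ}
    (h : HasCyc G s) : 2 ≤ s := by
  obtain ⟨f, _, _, hwrap⟩ := h
  by_contra hs
  interval_cases s <;> exact hirr _ hwrap

lemma hasCyc_le_card {G : V → V → Prop} {s : ℕ} (h : HasCyc G s) :
    s ≤ Fintype.card V := by
  obtain ⟨f, hinj, _, _⟩ := h
  calc s = (Finset.range s).card := by simp
  _ = ((Finset.range s).image f).card := by
      rw [Finset.card_image_of_injOn]
      intro a ha b hb hab
      exact hinj a (Finset.mem_range.mp ha) b (Finset.mem_range.mp hb) hab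
  _ ≤ (Finset.univ : Finset V).card := Finset.card_le_card (Finset.subset_univ _)
  _ = Fintype.card V := Finset.card_univ

lemma exists_hasCyc (G : V → V → Prop) (v0 : V) (nxt : V → V)
    (h : ∀ v, G v (nxt v)) : ∃ s, HasCyc G s := by
  classical
  set q : ℕ → V := fun t => nxt^[t] v0 with hq
  have hqsucc : ∀ t, q (t + 1) = nxt (q t) := by
    intro t; simp [hq, Function.iterate_succ_apply']
  have hqarc : ∀ t, G (q t) (q (t + 1)) := by
    intro t; rw [hqsucc]; exact h _
  -- pigeonhole
  set n := Fintype.card V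
  obtain ⟨x, hx, y, hy, hxy, hfeq⟩ :=
    Finset.exists_ne_map_eq_of_card_lt_of_maps_to
      (s := Finset.range (n + 1)) (t := (Finset.univ : Finset V))
      (by simp [n]) (fun a _ => Finset.mem_univ (q a))
  -- pairs with first < second and equal images
  set P : Finset (ℕ × ℕ) :=
    ((Finset.range (n + 1)) ×ˢ (Finset.range (n + 1))).filter
      (fun p => p.1 < p.2 ∧ q p.1 = q p.2) with hP
  have hPne : P.Nonempty := by
    simp only [Finset.mem_range] at hx hy
    rcases lt_or_gt_of_ne hxy with hlt | hlt
    · refine ⟨(x, y), ?_⟩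
      simp only [hP, Finset.mem_filter, Finset.mem_product, Finset.mem_range]
      exact ⟨⟨hx, hy⟩, hlt, hfeq⟩
    · refine ⟨(y, x), ?_⟩
      simp only [hP, Finset.mem_filter, Finset.mem_product, Finset.mem_range]
      exact ⟨⟨hy, hx⟩, hlt, hfeq.symm⟩
  obtain ⟨p0, hp0P, hp0min⟩ := Finset.exists_min_image P (fun p => p.2) hPne
  obtain ⟨a, b⟩ := p0
  simp only [hP, Finset.mem_filter, Finset.mem_product, Finset.mem_range] at hp0P
  obtain ⟨⟨han, hbn⟩, hab, heq⟩ := hp0P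
  refine ⟨b - a, fun t => q (a + t), ?_, ?_, ?_⟩
  · -- injectivity
    intro t1 ht1 t2 ht2 hteq
    by_contra hne
    rcases lt_or_gt_of_ne hne with hlt | hlt
    · have : (a + t1, a + t2) ∈ P := by
        simp only [hP, Finset.mem_filter, Finset.mem_product, Finset.mem_range]
        exact ⟨⟨by omega, by omega⟩, by omega, hteq⟩
      have := hp0min _ this
      simp at this; omega
    · have : (a + t2, a + t1) ∈ P := by
        simp only [hP, Finset.mem_filter, Finset.mem_product, Finset.mem_range]
        exact ⟨⟨by omega, by omega⟩, by omega, hteq.symm⟩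
      have := hp0min _ this
      simp at this; omega
  · intro t _; exact hqarc _
  · have h1 : a + (b - a - 1) = b - 1 := by omega
    have h2 : b - 1 + 1 = b := by omega
    have := hqarc (b - 1)
    rw [h2] at this
    show G (q (a + (b - a - 1))) (q (a + 0))
    rw [h1, Nat.add_zero, heq]
    exact this





/-- From reflexive-transitive closure, extract an injective (simple) path. -/
lemma exists_path {rel : V → V → Prop} {x y : V} (h : Relation.ReflTransGen rel x y) :
    ∃ (s : ℕ) (p : ℕ → V), 1 ≤ s ∧ p 0 = x ∧ p (s - 1) = y ∧
      (∀ a < s, ∀ b < s, p a = p b → a = b) ∧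
      (∀ t, t + 1 < s → rel (p t) (p (t + 1))) := by
  classical
  induction h using Relation.ReflTransGen.head_induction_on with
  | refl =>
    exact ⟨1, fun _ => y, le_refl 1, rfl, rfl, fun a ha b hb _ => by omega,
      fun t ht => by omega⟩
  | @head x0 c0 hab hbc ih =>
    obtain ⟨s, p, hs1, hp0, hplast, hpinj, hparc⟩ := ih
    by_cases hx : ∃ t, t < s ∧ p t = x0
    · obtain ⟨t0, ht0, hpt0⟩ := hx
      refine ⟨s - t0, fun t => p (t0 + t), by omega, by simpa using hpt0, ?_, ?_, ?_⟩
      · show p (t0 + (s - t0 - 1)) = y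
        have : t0 + (s - t0 - 1) = s - 1 := by omega
        rw [this, hplast]
      · intro t1 ht1 t2 ht2 heq
        have := hpinj (t0 + t1) (by omega) (t0 + t2) (by omega) heq
        omega
      · intro t ht
        have h1 : t0 + t + 1 = t0 + (t + 1) := by omega
        have := hparc (t0 + t) (by omega)
        rwa [h1] at this
    · push_neg at hx
      refine ⟨s + 1, fun t => if t = 0 then x0 else p (t - 1), by omega, by simp, ?_, ?_, ?_⟩
      · simp only [Nat.add_sub_cancel]
        have hs0 : s ≠ 0 := by omega
        rw [if_neg hs0]
        exact hplast
      · intro t1 ht1 t2 ht2 heq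
        simp only at heq
        by_cases h1 : t1 = 0 <;> by_cases h2 : t2 = 0
        · omega
        · rw [if_pos h1, if_neg h2] at heq
          exact absurd heq.symm (hx (t2 - 1) (by omega))
        · rw [if_neg h1, if_pos h2] at heq
          exact absurd heq (hx (t1 - 1) (by omega))
        · rw [if_neg h1, if_neg h2] at heq
          have := hpinj (t1 - 1) (by omega) (t2 - 1) (by omega) heq
          omega
      · intro t ht
        show rel (if t = 0 then x0 else p (t - 1)) (if t + 1 = 0 then x0 else p (t + 1 - 1))
        by_cases h1 : t = 0
        · subst h1
          simp only [if_pos rfl, if_neg (by omega : (1:ℕ) ≠ 0)]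
          simpa [hp0] using hab
        · rw [if_neg h1, if_neg (by omega : t + 1 ≠ 0)]
          have h2 : t - 1 + 1 = t + 1 - 1 := by omega
          have := hparc (t - 1) (by omega)
          rwa [h2] at this

/-- The gap lemma: disjoint nonempty sets of positions on a cycle have an
`A`-position directly (cyclically) followed by a `B`-position with nothing of
`A ∪ B` strictly in between. -/
lemma gap_lemma {m : ℕ} [NeZero m] {A B : Finset (ZMod m)} (hA : A.Nonempty) (hB : B.Nonempty)
    (hAB : Disjoint A B) :
    ∃ i ∈ A, ∃ k ∈ B, ∀ t : ZMod m, t ∈ A ∪ B → 0 < (t - i).val → (k - i).val ≤ (t - i).val := by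
  classical
  obtain ⟨q, hqP, hqmin⟩ := Finset.exists_min_image (A ×ˢ B) (fun q => (q.2 - q.1).val)
    (hA.product hB)
  obtain ⟨i, k⟩ := q
  rw [Finset.mem_product] at hqP
  obtain ⟨hiA, hkB⟩ := hqP
  refine ⟨i, hiA, k, hkB, ?_⟩
  intro t ht htpos
  by_contra hcon
  push_neg at hcon
  rcases Finset.mem_union.mp ht with htA | htB
  · -- t ∈ A : the pair (t, k) has smaller value
    have hkey : (k - t).val = (k - i).val - (t - i).val := by
      have h1 : k - t = ((k - i).val : ZMod m) - ((t - i).val : ZMod m) := by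
        rw [ZMod.natCast_rightInverse (k - i), ZMod.natCast_rightInverse (t - i)]
        ring
      have h2 : k - t = (((k - i).val - (t - i).val : ℕ) : ZMod m) := by
        rw [h1, Nat.cast_sub (le_of_lt hcon)]
      rw [h2, ZMod.val_cast_of_lt]
      have := ZMod.val_lt (k - i)
      omega
    have := hqmin (t, k) (Finset.mem_product.mpr ⟨htA, hkB⟩)
    simp only at this
    rw [hkey] at this
    omega
  · -- t ∈ B : the pair (i, t) has smaller value
    have := hqmin (i, t) (Finset.mem_product.mpr ⟨hiA, htB⟩)
    simp only at this
    omega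



/-- Inserting a path of `s ≥ 1` new vertices into a cycle of length `m`
yields a cycle of length `m + s`. -/
lemma surgeryA (G : V → V → Prop) {m : ℕ} (hm : 2 ≤ m) (g : ZMod m → V)
    (hginj : Function.Injective g) (hgarc : ∀ j, G (g j) (g (j + 1)))
    {s : ℕ} (hs : 1 ≤ s) (p : ℕ → V)
    (hpR : ∀ t, t < s → ∀ j, p t ≠ g j)
    (hpinj : ∀ a < s, ∀ b < s, p a = p b → a = b)
    (hparc : ∀ t, t + 1 < s → G (p t) (p (t + 1)))
    (j₀ : ZMod m) (hin : G (g j₀) (p 0)) (hout : G (p (s - 1)) (g (j₀ + 1))) :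
    HasCyc G (m + s) := by
  haveI : NeZero m := ⟨by omega⟩
  set F : ℕ → V := fun t => if t < m then g (j₀ + 1 + (t : ZMod m)) else p (t - m) with hF
  have hcast : ∀ a < m, ∀ b < m, (a : ZMod m) = (b : ZMod m) → a = b := by
    intro a ha b hb hab
    have := congrArg ZMod.val hab
    rwa [ZMod.val_cast_of_lt ha, ZMod.val_cast_of_lt hb] at this
  refine ⟨F, ?_, ?_, ?_⟩
  · intro a ha b hb heq
    simp only [hF] at heq
    by_cases h1 : a < m <;> by_cases h2 : b < m
    · rw [if_pos h1, if_pos h2] at heq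
      exact hcast a h1 b h2 (by
        have := hginj heq
        exact add_left_cancel this)
    · rw [if_pos h1, if_neg h2] at heq
      exact absurd heq.symm (hpR (b - m) (by omega) _)
    · rw [if_neg h1, if_pos h2] at heq
      exact absurd heq (hpR (a - m) (by omega) _)
    · rw [if_neg h1, if_neg h2] at heq
      have := hpinj (a - m) (by omega) (b - m) (by omega) heq
      omega
  · intro t ht
    show G (if t < m then g (j₀ + 1 + (t : ZMod m)) else p (t - m))
      (if t + 1 < m then g (j₀ + 1 + ((t + 1 : ℕ) : ZMod m)) else p (t + 1 - m))
    by_cases h1 : t + 1 < m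
    · rw [if_pos (by omega : t < m), if_pos h1]
      have : (j₀ + 1 + ((t + 1 : ℕ) : ZMod m)) = (j₀ + 1 + (t : ZMod m)) + 1 := by
        push_cast; ring
      rw [this]
      exact hgarc _
    · by_cases h2 : t < m
      · -- t = m - 1
        rw [if_pos h2, if_neg h1]
        have ht' : t = m - 1 := by omega
        have hc1 : ((t : ℕ) : ZMod m) = -1 := by
          rw [ht']
          have : ((m - 1 : ℕ) : ZMod m) = (m : ZMod m) - 1 := by
            rw [Nat.cast_sub (by omega : 1 ≤ m)]; simp
          rw [this, ZMod.natCast_self]; ring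
        rw [hc1]
        have : j₀ + 1 + -1 = j₀ := by ring
        rw [this]
        have : t + 1 - m = 0 := by omega
        rw [this]
        exact hin
      · rw [if_neg h2, if_neg h1]
        have harith : t + 1 - m = (t - m) + 1 := by omega
        rw [harith]
        exact hparc (t - m) (by omega)
  · show G (if m + s - 1 < m then _ else p (m + s - 1 - m)) (if 0 < m then g (j₀ + 1 + ((0:ℕ) : ZMod m)) else _)
    rw [if_neg (by omega : ¬ m + s - 1 < m), if_pos (by omega : 0 < m)]
    have h1 : m + s - 1 - m = s - 1 := by omega
    have h2 : j₀ + 1 + ((0:ℕ) : ZMod m) = j₀ + 1 := by push_cast; ring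
    rw [h1, h2]
    exact hout

/-- The main 3-segment surgery: from a cycle `θ 0, …, θ (m-1)`, an external
vertex `u` and suitable chords, build a cycle of length `m + 1`. -/
lemma surgeryB (G : V → V → Prop) {m ℓ c' : ℕ} (hm : 2 ≤ m) (hl : 1 ≤ ℓ)
    (hlc : ℓ ≤ c') (hc' : c' + 2 ≤ m)
    (θ : ℕ → V) (hθinj : ∀ a < m, ∀ b < m, θ a = θ b → a = b)
    (hθarc : ∀ t, t + 1 < m → G (θ t) (θ (t + 1)))
    (u : V) (hu : ∀ t, t < m → u ≠ θ t)
    (h1 : G (θ c') (θ 0)) (h2 : G (θ (ℓ - 1)) (θ (c' + 1)))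
    (h3 : G (θ (m - 1)) u) (h4 : G u (θ ℓ)) :
    HasCyc G (m + 1) := by
  set d := c' + 1 - ℓ with hd
  set ι : ℕ → ℕ := fun t => if t < d then ℓ + t else if t < c' + 1 then t - d else t with hι
  have hι_lt : ∀ t, t < m → ι t < m := by
    intro t ht; simp only [hι]; split_ifs <;> omega
  have hι_inj : ∀ a < m, ∀ b < m, ι a = ι b → a = b := by
    intro a ha b hb
    simp only [hι]; split_ifs <;> omega
  set F : ℕ → V := fun t => if t < m then θ (ι t) else u with hF
  refine ⟨F, ?_, ?_, ?_⟩
  · intro a ha b hb heq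
    simp only [hF] at heq
    by_cases ha' : a < m <;> by_cases hb' : b < m
    · rw [if_pos ha', if_pos hb'] at heq
      exact hι_inj a ha' b hb' (hθinj _ (hι_lt a ha') _ (hι_lt b hb') heq)
    · rw [if_pos ha', if_neg hb'] at heq
      exact absurd heq.symm (hu _ (hι_lt a ha'))
    · rw [if_neg ha', if_pos hb'] at heq
      exact absurd heq (hu _ (hι_lt b hb'))
    · omega
  · intro t ht
    show G (if t < m then θ (ι t) else u) (if t + 1 < m then θ (ι (t + 1)) else u)
    by_cases hlast : t + 1 < m
    · rw [if_pos (by omega), if_pos hlast]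
      by_cases hb1 : t + 1 < d
      · have e1 : ι t = ℓ + t := by simp only [hι]; rw [if_pos (by omega)]
        have e2 : ι (t + 1) = ℓ + t + 1 := by
          simp only [hι]; rw [if_pos hb1]; omega
        rw [e1, e2]
        exact hθarc _ (by omega)
      · by_cases hb2 : t + 1 = d
        · have e1 : ι t = c' := by simp only [hι]; rw [if_pos (by omega)]; omega
          have e2 : ι (t + 1) = 0 := by
            simp only [hι]; rw [if_neg (by omega), if_pos (by omega)]; omega
          rw [e1, e2]
          exact h1
        · by_cases hb3 : t + 1 < c' + 1
          · have e1 : ι t = t - d := by simp only [hι]; rw [if_neg (by omega), if_pos (by omega)]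
            have e2 : ι (t + 1) = t + 1 - d := by
              simp only [hι]; rw [if_neg (by omega), if_pos hb3]
            rw [e1, e2]
            have : t + 1 - d = (t - d) + 1 := by omega
            rw [this]
            exact hθarc _ (by omega)
          · by_cases hb4 : t + 1 = c' + 1
            · have e1 : ι t = ℓ - 1 := by
                simp only [hι]; rw [if_neg (by omega), if_pos (by omega)]; omega
              have e2 : ι (t + 1) = c' + 1 := by
                simp only [hι]; rw [if_neg (by omega), if_neg (by omega)]; omega
              rw [e1, e2]
              exact h2
            · have e1 : ι t = t := by simp only [hι]; rw [if_neg (by omega), if_neg (by omega)]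
              have e2 : ι (t + 1) = t + 1 := by
                simp only [hι]; rw [if_neg (by omega), if_neg (by omega)]
              rw [e1, e2]
              exact hθarc _ (by omega)
    · -- t + 1 = m
      rw [if_pos (by omega : t < m), if_neg hlast]
      have e1 : ι t = m - 1 := by
        simp only [hι]; rw [if_neg (by omega), if_neg (by omega)]; omega
      rw [e1]
      exact h3
  · show G (if m + 1 - 1 < m then θ (ι (m + 1 - 1)) else u) (if 0 < m then θ (ι 0) else u)
    rw [if_neg (by omega), if_pos (by omega)]
    have e : ι 0 = ℓ := by simp only [hι]; rw [if_pos (by omega)]; omega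
    rw [e]
    exact h4



theorem main_thm (G : V → V → Prop) [DecidableRel G]
    (n : ℕ) (hn : 2 ≤ n) (hcard : Fintype.card V = n) (hirr : Irreflexive G)
    (hσ : ∀ x y : V, x ≠ y → ¬ G x y →
      n ≤ (Finset.univ.filter (fun w => G x w)).card + (Finset.univ.filter (fun w => G w y)).card) :
    ∃ f : ZMod n ≃ V, ∀ i : ZMod n, G (f i) (f (i + 1)) := by
  classical
  have hNV : Nonempty V := Fintype.card_pos_iff.mp (by omega)
  have hdin_le : ∀ y : V, (Finset.univ.filter (fun w => G w y)).card ≤ n - 1 := by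
    intro y
    have hsub : Finset.univ.filter (fun w => G w y) ⊆ Finset.univ.erase y := by
      intro w hw
      rw [Finset.mem_erase]
      refine ⟨?_, Finset.mem_univ _⟩
      rintro rfl
      exact hirr _ (Finset.mem_filter.mp hw).2
    have := Finset.card_le_card hsub
    rwa [Finset.card_erase_of_mem (Finset.mem_univ _), Finset.card_univ, hcard] at this
  have hout1 : ∀ v : V, ∃ w, G v w := by
    intro v
    by_contra hcon
    push_neg at hcon
    obtain ⟨y, hy⟩ := Fintype.exists_ne_of_one_lt_card (by omega) v
    have h1 := hσ v y (Ne.symm hy) (hcon y)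
    have h2 : (Finset.univ.filter (fun w => G v w)) = ∅ := by
      ext w; simp [hcon w]
    rw [h2] at h1
    simp only [Finset.card_empty, zero_add] at h1
    have := hdin_le y
    omega
  choose nxt hnxt using hout1
  obtain ⟨s₀, hs₀⟩ := exists_hasCyc G hNV.some nxt hnxt
  obtain ⟨m, hm2, hmn, hmcyc, hmmax⟩ :
      ∃ m, 2 ≤ m ∧ m ≤ n ∧ HasCyc G m ∧ ∀ s, HasCyc G s → s ≤ m := by
    have hsp : HasCyc G (Nat.findGreatest (HasCyc G) n) :=
      Nat.findGreatest_spec (m := s₀) (by rw [← hcard]; exact hasCyc_le_card hs₀) hs₀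
    exact ⟨_, hasCyc_two_le hirr hsp, Nat.findGreatest_le n, hsp,
      fun s hs => Nat.le_findGreatest (by rw [← hcard]; exact hasCyc_le_card hs) hs⟩
  obtain ⟨f₀, hf₀inj, hf₀arc, hf₀wrap⟩ := hmcyc
  haveI : NeZero m := ⟨by omega⟩
  haveI : Fact (1 < m) := ⟨by omega⟩
  set g : ZMod m → V := fun j => f₀ j.val with hg
  have hginj : Function.Injective g := by
    intro a b hab
    have h1 := hf₀inj a.val (ZMod.val_lt a) b.val (ZMod.val_lt b) hab
    have h2 : ((a.val : ℕ) : ZMod m) = ((b.val : ℕ) : ZMod m) := by rw [h1]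
    rwa [ZMod.natCast_rightInverse a, ZMod.natCast_rightInverse b] at h2
  have hgarc : ∀ j : ZMod m, G (g j) (g (j + 1)) := by
    intro j
    have hjv := ZMod.val_lt j
    by_cases hj : j.val = m - 1
    · have h1 : (j + 1).val = 0 := by
        rw [ZMod.val_add, ZMod.val_one, hj, Nat.sub_add_cancel (by omega : 1 ≤ m), Nat.mod_self]
      show G (f₀ j.val) (f₀ (j + 1).val)
      rw [hj, h1]
      exact hf₀wrap
    · have h1 : (j + 1).val = j.val + 1 := by
        rw [ZMod.val_add, ZMod.val_one, Nat.mod_eq_of_lt (by omega)]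
      show G (f₀ j.val) (f₀ (j + 1).val)
      rw [h1]
      exact hf₀arc j.val (by omega)
  by_cases hmeq : m = n
  · subst hmeq
    have hbij : Function.Bijective g :=
      (Fintype.bijective_iff_injective_and_card g).mpr ⟨hginj, by rw [ZMod.card, hcard]⟩
    exact ⟨Equiv.ofBijective g hbij, fun i => hgarc i⟩
  have hmlt : m < n := by omega
  -- the two vertex classes
  set Zf : Finset V := Finset.univ.image g with hZf
  have hZmem : ∀ v, v ∈ Zf ↔ ∃ j, g j = v := by
    intro v; simp [hZf]
  have hZcard : Zf.card = m := by
    rw [hZf, Finset.card_image_of_injective _ hginj, Finset.card_univ, ZMod.card]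
  set Rf : Finset V := Zfᶜ with hRf
  have hRmem : ∀ v, v ∈ Rf ↔ ∀ j, v ≠ g j := by
    intro v
    rw [hRf, Finset.mem_compl, hZmem]
    push_neg
    constructor
    · intro h j hj; exact h j hj.symm
    · intro h j hj; exact h j hj.symm
  have hgZ : ∀ j, g j ∈ Zf := fun j => (hZmem _).mpr ⟨j, rfl⟩
  have hcards : m + Rf.card = n := by
    have h := Finset.card_add_card_compl Zf
    rw [hZcard, hcard] at h
    rw [hRf]
    omega
  have hr1 : 1 ≤ Rf.card := by omega
  -- degrees and position sets
  set dout : V → ℕ := fun v => (Finset.univ.filter (fun w => G v w)).card with hdoutdef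
  set din : V → ℕ := fun v => (Finset.univ.filter (fun w => G w v)).card with hdindef
  set A : V → Finset (ZMod m) := fun v => Finset.univ.filter (fun j => G (g j) v) with hAdef
  set B : V → Finset (ZMod m) := fun v => Finset.univ.filter (fun j => G v (g (j + 1))) with hBdef
  set outR : V → Finset V := fun v => Rf.filter (fun w => G v w) with houtRdef
  set inR : V → Finset V := fun v => Rf.filter (fun w => G w v) with hinRdef
  have hmemA : ∀ v j, j ∈ A v ↔ G (g j) v := by
    intro v j; simp [hAdef]
  have hmemB : ∀ v j, j ∈ B v ↔ G v (g (j + 1)) := by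
    intro v j; simp [hBdef]
  have hg1inj : Function.Injective (fun j : ZMod m => g (j + 1)) := by
    intro a b hab
    have := hginj hab
    exact add_right_cancel this
  have hdout_eq : ∀ v, dout v = (B v).card + (outR v).card := by
    intro v
    have hdisj : Disjoint ((B v).image (fun j => g (j + 1))) (outR v) := by
      rw [Finset.disjoint_left]
      intro w hw1 hw2
      rw [Finset.mem_image] at hw1
      obtain ⟨j, _, rfl⟩ := hw1
      have := Finset.mem_filter.mp hw2
      exact absurd (hgZ (j + 1)) (Finset.mem_compl.mp (hRf ▸ this.1))
    have hsplit : (Finset.univ.filter (fun w => G v w)) = ((B v).image (fun j => g (j + 1))) ∪ outR v := by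
      ext w
      simp only [Finset.mem_filter, Finset.mem_univ, true_and, Finset.mem_union, Finset.mem_image]
      constructor
      · intro hw
        by_cases hwZ : ∃ j, g j = w
        · obtain ⟨j, rfl⟩ := hwZ
          left
          exact ⟨j - 1, (hmemB v (j - 1)).mpr (by rwa [sub_add_cancel]), by rw [sub_add_cancel]⟩
        · right
          rw [houtRdef, Finset.mem_filter]
          refine ⟨(hRmem w).mpr (fun j hj => hwZ ⟨j, hj.symm⟩), hw⟩
      · rintro (⟨j, hj, rfl⟩ | hw)
        · exact (hmemB v j).mp hj
        · exact (Finset.mem_filter.mp hw).2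
    rw [hdoutdef]
    simp only
    rw [hsplit, Finset.card_union_of_disjoint hdisj, Finset.card_image_of_injective _ hg1inj]
  have hdin_eq : ∀ v, din v = (A v).card + (inR v).card := by
    intro v
    have hdisj : Disjoint ((A v).image g) (inR v) := by
      rw [Finset.disjoint_left]
      intro w hw1 hw2
      rw [Finset.mem_image] at hw1
      obtain ⟨j, _, rfl⟩ := hw1
      have := Finset.mem_filter.mp hw2
      exact absurd (hgZ j) (Finset.mem_compl.mp (hRf ▸ this.1))
    have hsplit : (Finset.univ.filter (fun w => G w v)) = ((A v).image g) ∪ inR v := by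
      ext w
      simp only [Finset.mem_filter, Finset.mem_univ, true_and, Finset.mem_union, Finset.mem_image]
      constructor
      · intro hw
        by_cases hwZ : ∃ j, g j = w
        · obtain ⟨j, rfl⟩ := hwZ
          left
          exact ⟨j, (hmemA v j).mpr hw, rfl⟩
        · right
          rw [hinRdef, Finset.mem_filter]
          exact ⟨(hRmem w).mpr (fun j hj => hwZ ⟨j, hj.symm⟩), hw⟩
      · rintro (⟨j, hj, rfl⟩ | hw)
        · exact (hmemA v j).mp hj
        · exact (Finset.mem_filter.mp hw).2
    rw [hdindef]
    simp only
    rw [hsplit, Finset.card_union_of_disjoint hdisj, Finset.card_image_of_injective _ hginj]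
  have houtR_le : ∀ v, v ∈ Rf → (outR v).card ≤ Rf.card - 1 := by
    intro v hv
    have hsub : outR v ⊆ Rf.erase v := by
      intro w hw
      rcases Finset.mem_filter.mp hw with ⟨h1, h2⟩
      rw [Finset.mem_erase]
      exact ⟨fun h => hirr v (h ▸ h2), h1⟩
    have := Finset.card_le_card hsub
    rwa [Finset.card_erase_of_mem hv] at this
  have hinR_le : ∀ v, v ∈ Rf → (inR v).card ≤ Rf.card - 1 := by
    intro v hv
    have hsub : inR v ⊆ Rf.erase v := by
      intro w hw
      rcases Finset.mem_filter.mp hw with ⟨h1, h2⟩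
      rw [Finset.mem_erase]
      exact ⟨fun h => hirr v (h ▸ h2), h1⟩
    have := Finset.card_le_card hsub
    rwa [Finset.card_erase_of_mem hv] at this
  have hZMcard : (Finset.univ : Finset (ZMod m)).card = m := by
    rw [Finset.card_univ, ZMod.card]
  have hσ' : ∀ x y, x ≠ y → ¬ G x y → m + Rf.card ≤ dout x + din y := by
    intro x y h1 h2
    have h3 := hσ x y h1 h2
    have h4 : dout x = (Finset.univ.filter (fun w => G x w)).card := by simp [hdoutdef]
    have h5 : din y = (Finset.univ.filter (fun w => G w y)).card := by simp [hdindef]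
    omega
  have hgR_ne : ∀ (v : V), v ∈ Rf → ∀ j, v ≠ g j := fun v hv => (hRmem v).mp hv
  -- reachability inside Rf
  set rel : V → V → Prop := fun a b => a ∈ Rf ∧ b ∈ Rf ∧ G a b with hreldef
  set reach : V → V → Prop := fun a b => Relation.ReflTransGen rel a b with hreachdef
  have hreach_refl : ∀ a, reach a a := fun a => Relation.ReflTransGen.refl
  have hreach_single : ∀ {a b}, a ∈ Rf → b ∈ Rf → G a b → reach a b := by
    intro a b ha hb hab
    exact Relation.ReflTransGen.single ⟨ha, hb, hab⟩
  -- Step 3: no segment insertion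
  have hAB : ∀ x, x ∈ Rf → ∀ y, y ∈ Rf → reach x y →
      ∀ j : ZMod m, j ∈ A x → j ∈ B y → False := by
    intro x hx y hy hxy j hjA hjB
    obtain ⟨s, p, hs1, hp0, hplast, hpinj, hparc⟩ := exists_path hxy
    have hpR : ∀ t, t < s → p t ∈ Rf := by
      intro t ht
      rcases eq_or_lt_of_le (by omega : t + 1 ≤ s) with he | hlt2
      · have h3 : t = s - 1 := by omega
        rw [h3, hplast]; exact hy
      · exact (hparc t hlt2).1
    have hcyc := surgeryA G hm2 g hginj hgarc hs1 p
      (fun t ht j' => hgR_ne _ (hpR t ht) j')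
      hpinj (fun t ht => (hparc t ht).2.2) j
      (by rw [hp0]; exact (hmemA x j).mp hjA)
      (by rw [hplast]; exact (hmemB y j).mp hjB)
    have := hmmax _ hcyc
    omega
  -- Step 4: G restricted to Rf is strongly connected
  have hstrong : ∀ x, x ∈ Rf → ∀ y, y ∈ Rf → reach x y := by
    by_contra hcon
    push_neg at hcon
    obtain ⟨a0, ha0, b0, hb0, hab0⟩ := hcon
    set Bwd : V → Finset V := fun x => Rf.filter (fun w => reach w x) with hBwd
    set Fwd : V → Finset V := fun x => Rf.filter (fun w => reach x w) with hFwd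
    have hBwd_mem : ∀ x w, w ∈ Bwd x ↔ w ∈ Rf ∧ reach w x := by
      intro x w; simp [hBwd]
    have hFwd_mem : ∀ x w, w ∈ Fwd x ↔ w ∈ Rf ∧ reach x w := by
      intro x w; simp [hFwd]
    obtain ⟨u1, hu1R, hu1min⟩ := Finset.exists_min_image Rf (fun x => (Bwd x).card) ⟨a0, ha0⟩
    have hu1prop : ∀ w, w ∈ Bwd u1 → reach u1 w := by
      intro w hw
      rcases (hBwd_mem u1 w).mp hw with ⟨hwR, hwu⟩
      have hsub : Bwd w ⊆ Bwd u1 := by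
        intro z hz
        rcases (hBwd_mem w z).mp hz with ⟨hzR, hzw⟩
        exact (hBwd_mem u1 z).mpr ⟨hzR, hzw.trans hwu⟩
      have heq : Bwd w = Bwd u1 :=
        Finset.eq_of_subset_of_card_le hsub (hu1min w hwR)
      have hmem : u1 ∈ Bwd w := by
        rw [heq]; exact (hBwd_mem u1 u1).mpr ⟨hu1R, hreach_refl u1⟩
      exact ((hBwd_mem w u1).mp hmem).2
    have hFu1ne : (Fwd u1).Nonempty := ⟨u1, (hFwd_mem u1 u1).mpr ⟨hu1R, hreach_refl u1⟩⟩
    obtain ⟨v1, hv1F, hv1min⟩ := Finset.exists_min_image (Fwd u1) (fun x => (Fwd x).card) hFu1ne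
    rcases (hFwd_mem u1 v1).mp hv1F with ⟨hv1R, huv1⟩
    have hv1prop : ∀ w, w ∈ Fwd v1 → reach w v1 := by
      intro w hw
      rcases (hFwd_mem v1 w).mp hw with ⟨hwR, hvw⟩
      have hwFu1 : w ∈ Fwd u1 := (hFwd_mem u1 w).mpr ⟨hwR, huv1.trans hvw⟩
      have hsub : Fwd w ⊆ Fwd v1 := by
        intro z hz
        rcases (hFwd_mem w z).mp hz with ⟨hzR, hwz⟩
        exact (hFwd_mem v1 z).mpr ⟨hzR, hvw.trans hwz⟩
      have heq : Fwd w = Fwd v1 :=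
        Finset.eq_of_subset_of_card_le hsub (hv1min w hwFu1)
      have hmem : v1 ∈ Fwd w := by
        rw [heq]; exact (hFwd_mem v1 v1).mpr ⟨hv1R, hreach_refl v1⟩
      exact ((hFwd_mem w v1).mp hmem).2
    have hABle : ∀ x, x ∈ Rf → ∀ y, y ∈ Rf → reach x y → (A x).card + (B y).card ≤ m := by
      intro x hx y hy hxy
      have hd : Disjoint (A x) (B y) := by
        rw [Finset.disjoint_left]
        intro j hj1 hj2
        exact hAB x hx y hy hxy j hj1 hj2
      calc (A x).card + (B y).card = (A x ∪ B y).card := (Finset.card_union_of_disjoint hd).symm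
      _ ≤ (Finset.univ : Finset (ZMod m)).card := Finset.card_le_card (Finset.subset_univ _)
      _ = m := hZMcard
    by_cases hint : ((Bwd u1) ∩ (Fwd v1)).Nonempty
    · -- both-closed component case
      obtain ⟨w0, hw0⟩ := hint
      rcases Finset.mem_inter.mp hw0 with ⟨hw0B, hw0F⟩
      have hv1u1 : reach v1 u1 :=
        ((hFwd_mem v1 w0).mp hw0F).2.trans ((hBwd_mem u1 w0).mp hw0B).2
      set C := Bwd u1 with hC
      have hCF : C = Fwd v1 := by
        apply Finset.Subset.antisymm
        · intro xx hxx
          rcases (hBwd_mem u1 xx).mp hxx with ⟨hxxR, _⟩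
          exact (hFwd_mem v1 xx).mpr ⟨hxxR, hv1u1.trans (hu1prop xx hxx)⟩
        · intro xx hxx
          rcases (hFwd_mem v1 xx).mp hxx with ⟨hxxR, _⟩
          exact (hBwd_mem u1 xx).mpr ⟨hxxR, (hv1prop xx hxx).trans hv1u1⟩
      have hCin : ∀ x, x ∈ C → ∀ w, w ∈ Rf → G w x → w ∈ C := by
        intro x hx w hwR hwx
        rcases (hBwd_mem u1 x).mp hx with ⟨hxR, hxu⟩
        exact (hBwd_mem u1 w).mpr ⟨hwR, (hreach_single hwR hxR hwx).trans hxu⟩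
      have hCout : ∀ x, x ∈ C → ∀ w, w ∈ Rf → G x w → w ∈ C := by
        intro x hx w hwR hxw
        have hx' : x ∈ Fwd v1 := hCF ▸ hx
        rcases (hFwd_mem v1 x).mp hx' with ⟨hxR, hvx⟩
        have hmem : w ∈ Fwd v1 :=
          (hFwd_mem v1 w).mpr ⟨hwR, hvx.trans (hreach_single hxR hwR hxw)⟩
        rw [hCF]; exact hmem
      have hCsubR : C ⊆ Rf := fun x hx => ((hBwd_mem u1 x).mp hx).1
      obtain ⟨t, htR, htC⟩ : ∃ t, t ∈ Rf ∧ t ∉ C := by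
        by_contra hcc
        push_neg at hcc
        have h1 : a0 ∈ C := hcc a0 ha0
        have h2 : b0 ∈ C := hcc b0 hb0
        exact hab0 (((hBwd_mem u1 a0).mp h1).2.trans (hu1prop b0 h2))
      have hu1C : u1 ∈ C := (hBwd_mem u1 u1).mpr ⟨hu1R, hreach_refl u1⟩
      have hut_ne : u1 ≠ t := fun h => htC (h ▸ hu1C)
      have hnGut : ¬ G u1 t := fun h => htC (hCout u1 hu1C t htR h)
      have hnGtu : ¬ G t u1 := fun h => htC (hCin u1 hu1C t htR h)
      have hCpos : 1 ≤ C.card := Finset.card_pos.mpr ⟨u1, hu1C⟩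
      have hCr : C.card ≤ Rf.card := Finset.card_le_card hCsubR
      have hb1 : (outR u1).card + 1 ≤ C.card := by
        have hsub : outR u1 ⊆ C.erase u1 := by
          intro w hw
          rcases Finset.mem_filter.mp hw with ⟨hwR, hxw⟩
          rw [Finset.mem_erase]
          exact ⟨fun h => hirr u1 (h ▸ hxw), hCout u1 hu1C w hwR hxw⟩
        have h1 := Finset.card_le_card hsub
        rw [Finset.card_erase_of_mem hu1C] at h1
        omega
      have hb2 : (inR u1).card + 1 ≤ C.card := by
        have hsub : inR u1 ⊆ C.erase u1 := by
          intro w hw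
          rcases Finset.mem_filter.mp hw with ⟨hwR, hxw⟩
          rw [Finset.mem_erase]
          exact ⟨fun h => hirr u1 (h ▸ hxw), hCin u1 hu1C w hwR hxw⟩
        have h1 := Finset.card_le_card hsub
        rw [Finset.card_erase_of_mem hu1C] at h1
        omega
      have htRC : t ∈ Rf \ C := Finset.mem_sdiff.mpr ⟨htR, htC⟩
      have hb3 : (outR t).card + 1 + C.card ≤ Rf.card := by
        have hsub : outR t ⊆ (Rf \ C).erase t := by
          intro w hw
          rcases Finset.mem_filter.mp hw with ⟨hwR, htw⟩
          rw [Finset.mem_erase, Finset.mem_sdiff]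
          exact ⟨fun h => hirr t (h ▸ htw), hwR, fun hwC => htC (hCin w hwC t htR htw)⟩
        have h1 := Finset.card_le_card hsub
        rw [Finset.card_erase_of_mem htRC, Finset.card_sdiff_of_subset hCsubR] at h1
        have h2 : 1 ≤ (Rf \ C).card := Finset.card_pos.mpr ⟨t, htRC⟩
        rw [Finset.card_sdiff_of_subset hCsubR] at h2
        omega
      have hb4 : (inR t).card + 1 + C.card ≤ Rf.card := by
        have hsub : inR t ⊆ (Rf \ C).erase t := by
          intro w hw
          rcases Finset.mem_filter.mp hw with ⟨hwR, hwt⟩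
          rw [Finset.mem_erase, Finset.mem_sdiff]
          exact ⟨fun h => hirr t (h ▸ hwt), hwR, fun hwC => htC (hCout w hwC t htR hwt)⟩
        have h1 := Finset.card_le_card hsub
        rw [Finset.card_erase_of_mem htRC, Finset.card_sdiff_of_subset hCsubR] at h1
        have h2 : 1 ≤ (Rf \ C).card := Finset.card_pos.mpr ⟨t, htRC⟩
        rw [Finset.card_sdiff_of_subset hCsubR] at h2
        omega
      have hσ1 := hσ' u1 t hut_ne hnGut
      have hσ2 := hσ' t u1 (Ne.symm hut_ne) hnGtu
      have he1 := hdout_eq u1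
      have he2 := hdin_eq t
      have he3 := hdout_eq t
      have he4 := hdin_eq u1
      have hc1 := hABle u1 hu1R u1 hu1R (hreach_refl u1)
      have hc2 := hABle t htR t htR (hreach_refl t)
      rw [he1, he2] at hσ1
      rw [he3, he4] at hσ2
      omega
    · -- disjoint case
      have hdisjBF : Disjoint (Bwd u1) (Fwd v1) :=
        Finset.disjoint_iff_inter_eq_empty.mpr (Finset.not_nonempty_iff_eq_empty.mp hint)
      have hne : u1 ≠ v1 := by
        rintro rfl
        exact hint ⟨u1, Finset.mem_inter.mpr
          ⟨(hBwd_mem u1 u1).mpr ⟨hu1R, hreach_refl u1⟩,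
           (hFwd_mem u1 u1).mpr ⟨hu1R, hreach_refl u1⟩⟩⟩
      have hnGvu : ¬ G v1 u1 := by
        intro h
        exact hint ⟨v1, Finset.mem_inter.mpr
          ⟨(hBwd_mem u1 v1).mpr ⟨hv1R, hreach_single hv1R hu1R h⟩,
           (hFwd_mem v1 v1).mpr ⟨hv1R, hreach_refl v1⟩⟩⟩
      have hσ1 := hσ' v1 u1 (Ne.symm hne) hnGvu
      have he1 := hdout_eq v1
      have he2 := hdin_eq u1
      have hc1 := hABle u1 hu1R v1 hv1R huv1
      have ho1 : (outR v1).card + 1 ≤ (Fwd v1).card := by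
        have hv1Fv1 : v1 ∈ Fwd v1 := (hFwd_mem v1 v1).mpr ⟨hv1R, hreach_refl v1⟩
        have hsub : outR v1 ⊆ (Fwd v1).erase v1 := by
          intro w hw
          rcases Finset.mem_filter.mp hw with ⟨hwR, hxw⟩
          rw [Finset.mem_erase]
          exact ⟨fun h => hirr v1 (h ▸ hxw),
            (hFwd_mem v1 w).mpr ⟨hwR, hreach_single hv1R hwR hxw⟩⟩
        have h1 := Finset.card_le_card hsub
        rw [Finset.card_erase_of_mem hv1Fv1] at h1
        have h2 : 1 ≤ (Fwd v1).card := Finset.card_pos.mpr ⟨v1, hv1Fv1⟩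
        omega
      have hi1 : (inR u1).card + 1 ≤ (Bwd u1).card := by
        have hu1Bu1 : u1 ∈ Bwd u1 := (hBwd_mem u1 u1).mpr ⟨hu1R, hreach_refl u1⟩
        have hsub : inR u1 ⊆ (Bwd u1).erase u1 := by
          intro w hw
          rcases Finset.mem_filter.mp hw with ⟨hwR, hxw⟩
          rw [Finset.mem_erase]
          exact ⟨fun h => hirr u1 (h ▸ hxw),
            (hBwd_mem u1 w).mpr ⟨hwR, hreach_single hwR hu1R hxw⟩⟩
        have h1 := Finset.card_le_card hsub
        rw [Finset.card_erase_of_mem hu1Bu1] at h1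
        have h2 : 1 ≤ (Bwd u1).card := Finset.card_pos.mpr ⟨u1, hu1Bu1⟩
        omega
      have hcb : (Bwd u1).card + (Fwd v1).card ≤ Rf.card := by
        have h1 : Bwd u1 ∪ Fwd v1 ⊆ Rf := by
          intro w hw
          rcases Finset.mem_union.mp hw with h | h
          exacts [((hBwd_mem u1 w).mp h).1, ((hFwd_mem v1 w).mp h).1]
        have h2 := Finset.card_le_card h1
        rw [Finset.card_union_of_disjoint hdisjBF] at h2
        omega
      rw [he1, he2] at hσ1
      omega
  -- Step 5: final counting and surgery
  obtain ⟨u, huR⟩ := Finset.card_pos.mp (by omega : 0 < Rf.card)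
  have hApos : ∀ v, v ∈ Rf → (A v).Nonempty := by
    intro v hv
    by_contra hAe
    rw [Finset.not_nonempty_iff_eq_empty] at hAe
    have h1 : ∀ j : ZMod m, (outR (g j)).Nonempty := by
      intro j
      by_contra he
      rw [Finset.not_nonempty_iff_eq_empty] at he
      have hne : g j ≠ v := fun h => (hgR_ne v hv j) h.symm
      have hnar : ¬ G (g j) v := by
        intro h
        have hmem : j ∈ A v := (hmemA v j).mpr h
        rw [hAe] at hmem
        exact absurd hmem (Finset.notMem_empty j)
      have hσ1 := hσ' (g j) v hne hnar
      have he1 := hdout_eq (g j)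
      have he2 := hdin_eq v
      have hi := hinR_le v hv
      have hBle : (B (g j)).card ≤ m - 1 := by
        have hsub : B (g j) ⊆ Finset.univ.erase (j - 1) := by
          intro j' hj'
          rw [Finset.mem_erase]
          refine ⟨?_, Finset.mem_univ _⟩
          intro hh
          rw [hh] at hj'
          have h3 := (hmemB (g j) (j - 1)).mp hj'
          rw [sub_add_cancel] at h3
          exact hirr _ h3
        have h4 := Finset.card_le_card hsub
        rwa [Finset.card_erase_of_mem (Finset.mem_univ _), hZMcard] at h4
      rw [he1, he2, hAe, he] at hσ1
      simp only [Finset.card_empty] at hσ1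
      omega
    have h2 : ∀ w, w ∈ Rf → B w = ∅ := by
      intro w hw
      rw [Finset.eq_empty_iff_forall_notMem]
      intro k hk
      obtain ⟨u', hu'⟩ := h1 k
      rcases Finset.mem_filter.mp hu' with ⟨hu'R, hu'G⟩
      have hkA : k ∈ A u' := (hmemA u' k).mpr hu'G
      exact hAB u' hu'R w hw (hstrong u' hu'R w hw) k hkA hk
    have hnar2 : ¬ G v (g 0) := by
      intro h
      have hmem : ((0 : ZMod m) - 1) ∈ B v := (hmemB v _).mpr (by rwa [sub_add_cancel])
      rw [h2 v hv] at hmem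
      exact absurd hmem (Finset.notMem_empty _)
    have hσ2 := hσ' v (g 0) (fun h => (hgR_ne v hv 0) h) hnar2
    have he1 := hdout_eq v
    have he2 := hdin_eq (g 0)
    have ho := houtR_le v hv
    have hAle : (A (g 0)).card ≤ m - 1 := by
      have hsub : A (g 0) ⊆ Finset.univ.erase (0 : ZMod m) := by
        intro j' hj'
        rw [Finset.mem_erase]
        refine ⟨?_, Finset.mem_univ _⟩
        rintro rfl
        exact hirr _ ((hmemA (g 0) 0).mp hj')
      have h4 := Finset.card_le_card hsub
      rwa [Finset.card_erase_of_mem (Finset.mem_univ _), hZMcard] at h4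
    have hinRg0 : inR (g 0) = ∅ := by
      rw [Finset.eq_empty_iff_forall_notMem]
      intro w hw
      rcases Finset.mem_filter.mp hw with ⟨hwR, hwG⟩
      have hmem : ((0:ZMod m) - 1) ∈ B w := (hmemB w _).mpr (by rwa [sub_add_cancel])
      rw [h2 w hwR] at hmem
      exact absurd hmem (Finset.notMem_empty _)
    rw [he1, h2 v hv, he2, hinRg0] at hσ2
    simp only [Finset.card_empty] at hσ2
    omega
  have hBpos : ∀ v, v ∈ Rf → (B v).Nonempty := by
    intro v hv
    by_contra hBe
    rw [Finset.not_nonempty_iff_eq_empty] at hBe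
    have h1 : ∀ j : ZMod m, (inR (g (j + 1))).Nonempty := by
      intro j
      by_contra he
      rw [Finset.not_nonempty_iff_eq_empty] at he
      have hne : v ≠ g (j + 1) := hgR_ne v hv (j + 1)
      have hnar : ¬ G v (g (j + 1)) := by
        intro h
        have hmem : j ∈ B v := (hmemB v j).mpr h
        rw [hBe] at hmem
        exact absurd hmem (Finset.notMem_empty j)
      have hσ1 := hσ' v (g (j + 1)) hne hnar
      have he1 := hdout_eq v
      have he2 := hdin_eq (g (j + 1))
      have ho := houtR_le v hv
      have hAle : (A (g (j + 1))).card ≤ m - 1 := by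
        have hsub : A (g (j + 1)) ⊆ Finset.univ.erase (j + 1) := by
          intro j' hj'
          rw [Finset.mem_erase]
          refine ⟨?_, Finset.mem_univ _⟩
          rintro rfl
          exact hirr _ ((hmemA (g (j + 1)) (j + 1)).mp hj')
        have h4 := Finset.card_le_card hsub
        rwa [Finset.card_erase_of_mem (Finset.mem_univ _), hZMcard] at h4
      rw [he1, hBe, he2, he] at hσ1
      simp only [Finset.card_empty] at hσ1
      omega
    have h2 : ∀ w, w ∈ Rf → A w = ∅ := by
      intro w hw
      rw [Finset.eq_empty_iff_forall_notMem]
      intro k hk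
      obtain ⟨u', hu'⟩ := h1 (k - 1)
      rcases Finset.mem_filter.mp hu' with ⟨hu'R, hu'G⟩
      rw [sub_add_cancel] at hu'G
      have hkB : (k - 1) ∈ B u' := (hmemB u' (k - 1)).mpr (by rwa [sub_add_cancel])
      obtain ⟨u'', hu''⟩ := h1 k
      rcases Finset.mem_filter.mp hu'' with ⟨hu''R, hu''G⟩
      have hkB' : k ∈ B u'' := (hmemB u'' k).mpr hu''G
      exact hAB w hw u'' hu''R (hstrong w hw u'' hu''R) k hk hkB'
    have hnar2 : ¬ G (g 0) v := by
      intro h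
      have hmem : (0 : ZMod m) ∈ A v := (hmemA v 0).mpr h
      rw [h2 v hv] at hmem
      exact absurd hmem (Finset.notMem_empty _)
    have hσ2 := hσ' (g 0) v (fun h => hgR_ne v hv 0 h.symm) hnar2
    have he1 := hdout_eq (g 0)
    have he2 := hdin_eq v
    have hi := hinR_le v hv
    have hBle : (B (g 0)).card ≤ m - 1 := by
      have hsub : B (g 0) ⊆ Finset.univ.erase ((0:ZMod m) - 1) := by
        intro j' hj'
        rw [Finset.mem_erase]
        refine ⟨?_, Finset.mem_univ _⟩
        intro hh
        rw [hh] at hj'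
        have h3 := (hmemB (g 0) _).mp hj'
        rw [sub_add_cancel] at h3
        exact hirr _ h3
      have h4 := Finset.card_le_card hsub
      rwa [Finset.card_erase_of_mem (Finset.mem_univ _), hZMcard] at h4
    have houtRg0 : outR (g 0) = ∅ := by
      rw [Finset.eq_empty_iff_forall_notMem]
      intro w hw
      rcases Finset.mem_filter.mp hw with ⟨hwR, hwG⟩
      have hmem : (0:ZMod m) ∈ A w := (hmemA w 0).mpr hwG
      rw [h2 w hwR] at hmem
      exact absurd hmem (Finset.notMem_empty _)
    rw [he1, houtRg0, he2, h2 v hv] at hσ2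
    simp only [Finset.card_empty] at hσ2
    omega
  have hABdisj_u : Disjoint (A u) (B u) := by
    rw [Finset.disjoint_left]
    intro j hj1 hj2
    exact hAB u huR u huR (hreach_refl u) j hj1 hj2
  obtain ⟨i, hiA, k, hkB, hgap⟩ := gap_lemma (hApos u huR) (hBpos u huR) hABdisj_u
  set l := (k - i).val with hldef
  have hl1 : 1 ≤ l := by
    rcases Nat.eq_zero_or_pos l with h | h
    · exfalso
      have h3 : ((k - i).val : ZMod m) = k - i := ZMod.natCast_rightInverse (k - i)
      rw [← hldef, h, Nat.cast_zero] at h3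
      have h4 : k = i := sub_eq_zero.mp h3.symm
      rw [h4] at hkB
      exact hAB u huR u huR (hreach_refl u) i hiA hkB
    · exact h
  have hlm : l < m := ZMod.val_lt _
  have hcastval : ((k - i).val : ZMod m) = k - i := ZMod.natCast_rightInverse (k - i)
  have hki : i + (l : ZMod m) = k := by
    rw [hldef, hcastval]; ring
  set θ : ℕ → V := fun t => g (i + 1 + (t : ZMod m)) with hθdef
  have hθarc : ∀ t, G (θ t) (θ (t + 1)) := by
    intro t
    have h1 : (i + 1 + ((t + 1 : ℕ) : ZMod m)) = (i + 1 + (t : ZMod m)) + 1 := by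
      push_cast; ring
    show G (g (i + 1 + (t : ZMod m))) (g (i + 1 + ((t + 1 : ℕ) : ZMod m)))
    rw [h1]
    exact hgarc _
  have hθinj : ∀ a, a < m → ∀ b, b < m → θ a = θ b → a = b := by
    intro a ha b hb heq
    have h1 := hginj heq
    have h2 : (a : ZMod m) = (b : ZMod m) := add_left_cancel h1
    have h3 := congrArg ZMod.val h2
    rwa [ZMod.val_cast_of_lt ha, ZMod.val_cast_of_lt hb] at h3
  have hθR : ∀ t, t < m → u ≠ θ t := fun t _ => hgR_ne u huR _
  have hθ0 : θ 0 = g (i + 1) := by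
    show g (i + 1 + ((0:ℕ) : ZMod m)) = g (i + 1)
    norm_num
  have hθl : θ l = g (k + 1) := by
    show g (i + 1 + (l : ZMod m)) = g (k + 1)
    rw [show i + 1 + (l : ZMod m) = (i + (l : ZMod m)) + 1 by ring, hki]
  have hθl1 : θ (l - 1) = g k := by
    show g (i + 1 + ((l - 1 : ℕ) : ZMod m)) = g k
    have h1 : i + 1 + ((l:ZMod m) - 1) = i + (l : ZMod m) := by ring
    rw [Nat.cast_sub hl1, Nat.cast_one, h1, hki]
  have hθm1 : θ (m - 1) = g i := by
    show g (i + 1 + ((m - 1 : ℕ) : ZMod m)) = g i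
    have h1 : ((m - 1 : ℕ) : ZMod m) = -1 := by
      rw [Nat.cast_sub (by omega : 1 ≤ m), Nat.cast_one, ZMod.natCast_self]; ring
    rw [h1]
    congr 1
    ring
  have hABl_card : (A u).card + (B u).card + (l - 1) ≤ m := by
    classical
    set Int : Finset (ZMod m) := (Finset.Ico 1 l).image (fun t : ℕ => i + (t : ZMod m)) with hInt
    have hIntcard : Int.card = l - 1 := by
      rw [hInt, Finset.card_image_of_injOn, Nat.card_Ico]
      intro a ha b hb heq
      simp only [Finset.coe_Ico, Set.mem_Ico] at ha hb
      have h2 : (a : ZMod m) = (b : ZMod m) := add_left_cancel heq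
      have h3 := congrArg ZMod.val h2
      rwa [ZMod.val_cast_of_lt (by omega), ZMod.val_cast_of_lt (by omega)] at h3
    have hd1 : Disjoint (A u ∪ B u) Int := by
      rw [Finset.disjoint_right]
      intro x hx
      rw [hInt, Finset.mem_image] at hx
      obtain ⟨t, ht, rfl⟩ := hx
      simp only [Finset.mem_Ico] at ht
      intro hmem
      have hval : ((i + (t : ZMod m)) - i).val = t := by
        rw [show i + (t : ZMod m) - i = (t : ZMod m) by ring, ZMod.val_cast_of_lt (by omega)]
      have h5 := hgap _ hmem (by rw [hval]; omega)
      rw [hval] at h5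
      omega
    have h2 : ((A u ∪ B u) ∪ Int).card ≤ m :=
      le_trans (Finset.card_le_card (Finset.subset_univ _)) (le_of_eq hZMcard)
    have h3 := Finset.card_union_of_disjoint hd1
    have h4 := Finset.card_union_of_disjoint hABdisj_u
    omega
  have hinRθ0 : inR (θ 0) = ∅ := by
    rw [Finset.eq_empty_iff_forall_notMem]
    intro w hw
    rcases Finset.mem_filter.mp hw with ⟨hwR, hwG⟩
    rw [hθ0] at hwG
    have hmem : i ∈ B w := (hmemB w i).mpr hwG
    exact hAB u huR w hwR (hstrong u huR w hwR) i hiA hmem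
  have houtRθ : outR (θ (l - 1)) = ∅ := by
    rw [Finset.eq_empty_iff_forall_notMem]
    intro w hw
    rcases Finset.mem_filter.mp hw with ⟨hwR, hwG⟩
    rw [hθl1] at hwG
    have hmem : k ∈ A w := (hmemA w k).mpr hwG
    exact hAB w hwR u huR (hstrong w hwR u huR) k hmem hkB
  have hd1 : m + 1 ≤ din (θ 0) + (B u).card := by
    have hne : u ≠ θ 0 := hθR 0 (by omega)
    have hnar : ¬ G u (θ 0) := by
      rw [hθ0]
      intro h
      have hmem : i ∈ B u := (hmemB u i).mpr h
      exact hAB u huR u huR (hreach_refl u) i hiA hmem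
    have hσ1 := hσ' u (θ 0) hne hnar
    have he1 := hdout_eq u
    have ho := houtR_le u huR
    rw [he1] at hσ1
    omega
  have hd2 : m + 1 ≤ dout (θ (l - 1)) + (A u).card := by
    have hne : θ (l - 1) ≠ u := fun h => hθR (l - 1) (by omega) h.symm
    have hnar : ¬ G (θ (l - 1)) u := by
      rw [hθl1]
      intro h
      have hmem : k ∈ A u := (hmemA u k).mpr h
      exact hAB u huR u huR (hreach_refl u) k hmem hkB
    have hσ1 := hσ' (θ (l - 1)) u hne hnar
    have he2 := hdin_eq u
    have hi := hinR_le u huR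
    rw [he2] at hσ1
    omega
  have hdinθ0 : din (θ 0) = (A (θ 0)).card := by
    rw [hdin_eq, hinRθ0]
    simp
  have hdoutθ : dout (θ (l - 1)) = (B (θ (l - 1))).card := by
    rw [hdout_eq, houtRθ]
    simp
  set φ : ℕ → ZMod m := fun t => i + 1 + (t : ZMod m) with hφdef
  have hφinjIco : Set.InjOn φ ↑(Finset.Ico l (m - 1)) := by
    intro a ha b hb heq
    simp only [Finset.coe_Ico, Set.mem_Ico] at ha hb
    have h2 : (a : ZMod m) = (b : ZMod m) := add_left_cancel heq
    have h3 := congrArg ZMod.val h2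
    rwa [ZMod.val_cast_of_lt (by omega), ZMod.val_cast_of_lt (by omega)] at h3
  set bad1 : Finset ℕ := (Finset.Ico l (m - 1)).filter (fun t => ¬ G (θ t) (θ 0)) with hbad1def
  set bad2 : Finset ℕ :=
    (Finset.Ico l (m - 1)).filter (fun t => ¬ G (θ (l - 1)) (θ (t + 1))) with hbad2def
  have hbound1 : (A (θ 0)).card + bad1.card ≤ m - 1 := by
    have hdisj : Disjoint (A (θ 0)) (bad1.image φ) := by
      rw [Finset.disjoint_left]
      intro j hj1 hj2
      rw [Finset.mem_image] at hj2
      obtain ⟨t, ht, rfl⟩ := hj2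
      have h3 := (Finset.mem_filter.mp ht).2
      exact h3 ((hmemA (θ 0) (φ t)).mp hj1)
    have hsub : A (θ 0) ∪ bad1.image φ ⊆ Finset.univ.erase (i + 1) := by
      intro j hj
      rw [Finset.mem_erase]
      refine ⟨?_, Finset.mem_univ _⟩
      rcases Finset.mem_union.mp hj with h | h
      · rintro rfl
        have h4 := (hmemA (θ 0) (i + 1)).mp h
        rw [hθ0] at h4
        exact hirr _ h4
      · rw [Finset.mem_image] at h
        obtain ⟨t, ht, heq⟩ := h
        have ht' := Finset.mem_Ico.mp (Finset.mem_of_mem_filter t ht)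
        intro hh
        rw [← heq] at hh
        have h5 : (t : ZMod m) = 0 := by
          have h6 : i + 1 + (t : ZMod m) = i + 1 := hh
          have h7 : i + 1 + (t : ZMod m) = i + 1 + 0 := by rw [add_zero]; exact h6
          exact add_left_cancel h7
        have h7 := congrArg ZMod.val h5
        rw [ZMod.val_cast_of_lt (by omega : t < m), ZMod.val_zero] at h7
        omega
    have himg : (bad1.image φ).card = bad1.card :=
      Finset.card_image_of_injOn (hφinjIco.mono (by
        intro x hx
        simp only [Finset.coe_filter, Set.mem_setOf_eq, Finset.mem_coe] at hx ⊢
        exact Finset.mem_of_mem_filter x (by exact hx)))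
    have h2 := Finset.card_le_card hsub
    rw [Finset.card_union_of_disjoint hdisj, himg,
      Finset.card_erase_of_mem (Finset.mem_univ _), hZMcard] at h2
    exact h2
  have hgφ : ∀ t : ℕ, g (φ t + 1) = θ (t + 1) := by
    intro t
    show g (φ t + 1) = g (i + 1 + ((t + 1 : ℕ) : ZMod m))
    congr 1
    rw [hφdef]
    push_cast
    ring
  have hbound2 : (B (θ (l - 1))).card + bad2.card ≤ m - 1 := by
    have hdisj : Disjoint (B (θ (l - 1))) (bad2.image φ) := by
      rw [Finset.disjoint_left]
      intro j hj1 hj2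
      rw [Finset.mem_image] at hj2
      obtain ⟨t, ht, rfl⟩ := hj2
      have h3 := (Finset.mem_filter.mp ht).2
      have h4 := (hmemB (θ (l - 1)) (φ t)).mp hj1
      rw [hgφ t] at h4
      exact h3 h4
    have hsub : B (θ (l - 1)) ∪ bad2.image φ ⊆ Finset.univ.erase (k - 1) := by
      intro j hj
      rw [Finset.mem_erase]
      refine ⟨?_, Finset.mem_univ _⟩
      rcases Finset.mem_union.mp hj with h | h
      · intro hh
        rw [hh] at h
        have h4 := (hmemB (θ (l - 1)) (k - 1)).mp h
        rw [sub_add_cancel, ← hθl1] at h4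
        exact hirr _ h4
      · rw [Finset.mem_image] at h
        obtain ⟨t, ht, heq⟩ := h
        have ht' := Finset.mem_Ico.mp (Finset.mem_of_mem_filter t ht)
        intro hh
        rw [← heq] at hh
        have h6 : i + 1 + (t : ZMod m) = i + (l : ZMod m) - 1 := by
          have h6' : i + 1 + (t : ZMod m) = k - 1 := hh
          rw [h6', ← hki]
        have h5 : (t : ZMod m) = (l : ZMod m) - 2 := by linear_combination h6
        rcases Nat.lt_or_ge l 2 with hl2 | hl2
        · have hl1' : l = 1 := by omega
          have h7 : (t : ZMod m) = ((m - 1 : ℕ) : ZMod m) := by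
            rw [h5, hl1']
            rw [Nat.cast_sub (by omega : 1 ≤ m), Nat.cast_one, ZMod.natCast_self]
            push_cast
            ring
          have h8 := congrArg ZMod.val h7
          rw [ZMod.val_cast_of_lt (by omega : t < m),
            ZMod.val_cast_of_lt (by omega : m - 1 < m)] at h8
          omega
        · have h7 : (t : ZMod m) = ((l - 2 : ℕ) : ZMod m) := by
            rw [h5, Nat.cast_sub hl2]
            push_cast
            ring
          have h8 := congrArg ZMod.val h7
          rw [ZMod.val_cast_of_lt (by omega : t < m),
            ZMod.val_cast_of_lt (by omega : l - 2 < m)] at h8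
          omega
    have himg : (bad2.image φ).card = bad2.card :=
      Finset.card_image_of_injOn (hφinjIco.mono (by
        intro x hx
        simp only [Finset.mem_coe] at hx ⊢
        exact Finset.mem_of_mem_filter x hx))
    have h2 := Finset.card_le_card hsub
    rw [Finset.card_union_of_disjoint hdisj, himg,
      Finset.card_erase_of_mem (Finset.mem_univ _), hZMcard] at h2
    exact h2
  obtain ⟨c', hc'l, hc'u, hc'1, hc'2⟩ :
      ∃ c', l ≤ c' ∧ c' + 2 ≤ m ∧ G (θ c') (θ 0) ∧ G (θ (l - 1)) (θ (c' + 1)) := by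
    classical
    set good : Finset ℕ := (Finset.Ico l (m - 1)).filter
      (fun t => G (θ t) (θ 0) ∧ G (θ (l - 1)) (θ (t + 1))) with hgood
    have hcover : Finset.Ico l (m - 1) ⊆ bad1 ∪ (bad2 ∪ good) := by
      intro t ht
      simp only [Finset.mem_union, hbad1def, hbad2def, hgood, Finset.mem_filter]
      by_cases h1 : G (θ t) (θ 0) <;> by_cases h2 : G (θ (l - 1)) (θ (t + 1))
      · exact Or.inr (Or.inr ⟨ht, h1, h2⟩)
      · exact Or.inr (Or.inl ⟨ht, h2⟩)
      · exact Or.inl ⟨ht, h1⟩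
      · exact Or.inl ⟨ht, h1⟩
    have hIcoCard : (Finset.Ico l (m - 1)).card = m - 1 - l := Nat.card_Ico _ _
    have hcard_le := Finset.card_le_card hcover
    have hub1 := Finset.card_union_le bad1 (bad2 ∪ good)
    have hub2 := Finset.card_union_le bad2 good
    have hd1' : m + 1 ≤ (A (θ 0)).card + (B u).card := by rw [hdinθ0] at hd1; omega
    have hd2' : m + 1 ≤ (B (θ (l - 1))).card + (A u).card := by rw [hdoutθ] at hd2; omega
    have hgoodpos : 0 < good.card := by omega
    obtain ⟨c', hc'⟩ := Finset.card_pos.mp hgoodpos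
    rw [hgood, Finset.mem_filter, Finset.mem_Ico] at hc'
    exact ⟨c', hc'.1.1, by omega, hc'.2.1, hc'.2.2⟩
  have hcyc2 := surgeryB G hm2 hl1 hc'l hc'u θ hθinj (fun t _ => hθarc t) u hθR hc'1 hc'2
    (by rw [hθm1]; exact (hmemA u i).mp hiA)
    (by rw [hθl]; exact (hmemB u k).mp hkB)
  have hfin := hmmax _ hcyc2
  omega





end WoodallProof

/-- Let `G` be a digraph on `n ≥ 2` vertices. If `σ₊₋(G) ≥ n`, then `G`
contains a directed Hamilton cycle. -/
theorem stmt12 {V : Type*} [Fintype V] (n : ℕ) (hn : 2 ≤ n) (hcard : Fintype.card V = n)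
    (G : V → V → Prop) (hirr : Irreflexive G)
    (hσ : SigmaGE G n) :
    HasDirectedHamCycle n G := by
  classical
  subst hcard
  have houtdeg : ∀ x : V, outdeg G x = (Finset.univ.filter (fun w => G x w)).card := by
    intro x
    have h : {u | G x u} = ↑(Finset.univ.filter (fun w => G x w)) := by ext u; simp
    rw [outdeg, h, Set.ncard_coe_finset]
  have hindeg : ∀ y : V, indeg G y = (Finset.univ.filter (fun w => G w y)).card := by
    intro y
    have h : {u | G u y} = ↑(Finset.univ.filter (fun w => G w y)) := by ext u; simp
    rw [indeg, h, Set.ncard_coe_finset]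
  have hσ' : ∀ x y : V, x ≠ y → ¬ G x y →
      Fintype.card V ≤ (Finset.univ.filter (fun w => G x w)).card
        + (Finset.univ.filter (fun w => G w y)).card := by
    intro x y h1 h2
    have h3 := hσ x y h1 h2
    rw [houtdeg x, hindeg y] at h3
    exact_mod_cast h3
  exact WoodallProof.main_thm G (Fintype.card V) hn rfl hirr hσ'
end

section
/- For every ε > 0 there exists an integer n₀ such that the following holds. Let G be a digraph on n ≥ n₀ vertices, let S ⊆ V(G), let m be a positive integer with m ≤ |S|, and set K = m/|S|. Then there exists a subset T ⊆ S with |T| = m such that for every vertex v of G: |d⁺(v,T) − K·d⁺(v,S)| ≤ εn, |d⁻(v,T) − K·d⁻(v,S)| ≤ εn, |d⁺(v,S∖T) − (1−K)·d⁺(v,S)| ≤ εn and |d⁻(v,S∖T) − (1−K)·d⁻(v,S)| ≤ εn. -/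
open Set

/-!
Pick `T` uniformly among the `m`-subsets of `S`. For `D ⊆ S`, the size `|T ∩ D|` is
hypergeometric with mean `m |D| / |S|`; double counting gives its factorial moments
`E (|T ∩ D|)_r = (|D|)_r (m)_r / (|S|)_r`, and from these its fourth central moment is at most
`|S| ^ 2`. Summing over the `2n` out- and in-neighbourhoods, the average over `T` of
`∑ (deviation) ^ 4` is at most `2n · n ^ 2 ≤ (εn) ^ 4` once `n ≥ 2 / ε ^ 4`, so some `T` has all
deviations at most `εn`. The deviations for `S \ T` are those for `T` with the sign flipped.
-/

namespace Nat

theorem cast_descFactorial_eq_prod_range {R : Type*} [CommRing R] (x k : ℕ) :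
    (x.descFactorial k : R) = ∏ i ∈ Finset.range k, ((x : R) - i) := by
  rw [← descPochhammer_eval_eq_descFactorial, descPochhammer_eval_eq_prod_range]

end Nat

-- `E (X - μ) ^ 4` for `X` hypergeometric (`m` draws from `s` objects, `d` of them marked),
-- expanded through `μ = m d / s` and the factorial moments `E (X)_r = (d)_r (m)_r / (s)_r`
noncomputable def hypergeometricFourthCentralMoment (s d m : ℝ) : ℝ :=
  d * (d - 1) * (d - 2) * (d - 3) * (m * (m - 1) * (m - 2) * (m - 3))
      / (s * (s - 1) * (s - 2) * (s - 3))
    + (6 - 4 * (m / s * d)) * (d * (d - 1) * (d - 2) * (m * (m - 1) * (m - 2))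
      / (s * (s - 1) * (s - 2)))
    + (7 - 12 * (m / s * d) + 6 * (m / s * d) ^ 2) * (d * (d - 1) * (m * (m - 1))
      / (s * (s - 1)))
    + (1 - 4 * (m / s * d) + 6 * (m / s * d) ^ 2 - 4 * (m / s * d) ^ 3) * (m / s * d)
    + (m / s * d) ^ 4

theorem hypergeometricFourthCentralMoment_le {s d m : ℝ} (hs : 4 ≤ s) (hd₀ : 0 ≤ d)
    (hds : d ≤ s) (hm₀ : 0 ≤ m) (hms : m ≤ s) :
    hypergeometricFourthCentralMoment s d m ≤ s ^ 2 := by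
  have hs₁ : 0 < s - 1 := by linarith
  have hs₂ : 0 < s - 2 := by linarith
  have hs₃ : 0 < s - 3 := by linarith
  set a := d * (s - d)
  set b := m * (s - m)
  have ha : 0 ≤ a := mul_nonneg hd₀ (by linarith)
  have hb : 0 ≤ b := mul_nonneg hm₀ (by linarith)
  have hab : a * b ≤ s ^ 4 / 16 := by
    have ha' : a ≤ s ^ 2 / 4 := by nlinarith [sq_nonneg (s - 2 * d)]
    have hb' : b ≤ s ^ 2 / 4 := by nlinarith [sq_nonneg (s - 2 * m)]
    nlinarith [mul_le_mul ha' hb' hb (by positivity)]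
  have hab₀ : 0 ≤ a * b := mul_nonneg ha hb
  -- the classical closed form of the fourth central moment of the hypergeometric distribution
  calc _ = (3 * (a * b) ^ 2 * (s - 2) * (s - 3)
        + a * b * ((s - 1) * s ^ 2 * (s * (s + 1) - 6 * a - 6 * b) + 6 * (a * b) * (5 * s - 6)))
        / (s ^ 4 * (s - 1) ^ 2 * (s - 2) * (s - 3)) := by
        simp only [hypergeometricFourthCentralMoment, a, b]
        field_simp
        ring
    _ ≤ s ^ 2 := by
      rw [div_le_iff₀ (by positivity)]
      calc _ ≤ a * b * (3 * (a * b) * (s - 2) * (s - 3) + (s - 1) * s ^ 3 * (s + 1)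
            + 6 * (a * b) * (5 * s - 6)) := by
            nlinarith [mul_nonneg (mul_nonneg hab₀ (add_nonneg ha hb))
              (mul_nonneg hs₁.le (sq_nonneg s))]
        _ ≤ s ^ 4 / 16 * (3 * (s ^ 4 / 16) * (s - 2) * (s - 3) + (s - 1) * s ^ 3 * (s + 1)
            + 6 * (s ^ 4 / 16) * (5 * s - 6)) := by
            have : 0 ≤ 5 * s - 6 := by linarith
            gcongr
        _ ≤ s ^ 2 * (s ^ 4 * (s - 1) ^ 2 * (s - 2) * (s - 3)) := by
            obtain ⟨t, ht, rfl⟩ : ∃ t, 0 ≤ t ∧ s = t + 4 := ⟨s - 4, by linarith, by ring⟩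
            ring_nf
            linarith [pow_nonneg ht 2, pow_nonneg ht 3, pow_nonneg ht 4, pow_nonneg ht 5,
              pow_nonneg ht 6, pow_nonneg ht 7, pow_nonneg ht 8, pow_nonneg ht 9, pow_nonneg ht 10]

namespace Finset

variable {α : Type*} [DecidableEq α]

theorem sum_powersetCard_choose_card_inter {S D : Finset α} (hDS : D ⊆ S) {m r : ℕ}
    (hrm : r ≤ m) :
    ∑ T ∈ S.powersetCard m, (T ∩ D).card.choose r
      = D.card.choose r * (S.card - r).choose (m - r) := by
  calc ∑ T ∈ S.powersetCard m, (T ∩ D).card.choose r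
      = ∑ T ∈ S.powersetCard m, ∑ R ∈ D.powersetCard r, if R ⊆ T then 1 else 0 := by
        refine sum_congr rfl fun T _ => ?_
        rw [← card_powersetCard, ← card_filter]
        congr 1
        ext R
        simp only [mem_powersetCard, mem_filter, subset_inter_iff]
        tauto
    _ = ∑ R ∈ D.powersetCard r, #{T ∈ S.powersetCard m | R ⊆ T} := by
        rw [sum_comm]
        simp only [card_filter]
    _ = ∑ R ∈ D.powersetCard r, (S.card - r).choose (m - r) := by
        refine sum_congr rfl fun R hR => ?_
        obtain ⟨hRD, hRr⟩ := mem_powersetCard.1 hR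
        rw [card_filter_powersetCard_subset R S m (hRD.trans hDS) (hRr ▸ hrm), hRr]
    _ = D.card.choose r * (S.card - r).choose (m - r) := by
        rw [sum_const, card_powersetCard, smul_eq_mul]

theorem sum_powersetCard_descFactorial_card_inter {S D : Finset α} (hDS : D ⊆ S) (m r : ℕ) :
    (∑ T ∈ S.powersetCard m, (T ∩ D).card.descFactorial r) * S.card.descFactorial r
      = D.card.descFactorial r * m.descFactorial r * S.card.choose m := by
  rcases le_or_gt r m with hrm | hmr
  · simp only [Nat.descFactorial_eq_factorial_mul_choose, ← mul_sum,
      sum_powersetCard_choose_card_inter hDS hrm]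
    linear_combination (r.factorial * r.factorial * D.card.choose r) *
      (Nat.choose_mul (n := S.card) hrm).symm
  · have hzero : ∀ T ∈ S.powersetCard m, (T ∩ D).card.descFactorial r = 0 := fun T hT =>
      Nat.descFactorial_of_lt <|
        (card_le_card inter_subset_left).trans_lt ((mem_powersetCard.1 hT).2 ▸ hmr)
    simp [sum_eq_zero hzero, Nat.descFactorial_of_lt hmr]

theorem abs_card_inter_sub_le {S T D : Finset α} (hTS : T ⊆ S) (hDS : D ⊆ S) :
    |((T ∩ D).card : ℝ) - (T.card / S.card : ℝ) * D.card| ≤ S.card / 4 := by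
  rcases S.eq_empty_or_nonempty with rfl | hS
  · obtain rfl := subset_empty.1 hTS
    simp
  have hs : (0 : ℝ) < S.card := by exact_mod_cast hS.card_pos
  have hxt : ((T ∩ D).card : ℝ) ≤ T.card := by exact_mod_cast card_le_card inter_subset_left
  have hxd : ((T ∩ D).card : ℝ) ≤ D.card := by exact_mod_cast card_le_card inter_subset_right
  have hunion : (T.card : ℝ) + D.card ≤ S.card + (T ∩ D).card := by
    exact_mod_cast (card_union_add_card_inter T D).symm.le.trans
      (Nat.add_le_add_right (card_le_card (union_subset hTS hDS)) _)
  have hds : (D.card : ℝ) ≤ S.card := by exact_mod_cast card_le_card hDS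
  have hts : (T.card : ℝ) ≤ S.card := by exact_mod_cast card_le_card hTS
  rw [show ((T ∩ D).card : ℝ) - T.card / S.card * D.card
      = ((T ∩ D).card * S.card - T.card * D.card) / S.card by field_simp,
    abs_div, abs_of_pos hs, div_le_iff₀ hs, abs_le]
  constructor
  · rcases le_total ((T.card : ℝ) + D.card) S.card with h | h <;>
      nlinarith [sq_nonneg ((T.card : ℝ) - D.card)]
  · nlinarith [sq_nonneg ((S.card : ℝ) - 2 * D.card)]

theorem sum_powersetCard_cast_descFactorial_card_inter {S D : Finset α} (hDS : D ⊆ S) (m : ℕ)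
    {r : ℕ} (hr : r ≤ S.card) :
    ∑ T ∈ S.powersetCard m, ((T ∩ D).card.descFactorial r : ℝ)
      = S.card.choose m * (D.card.descFactorial r * m.descFactorial r
        / S.card.descFactorial r) := by
  have hpos : (0 : ℝ) < S.card.descFactorial r := by
    exact_mod_cast Nat.descFactorial_pos.2 hr
  rw [eq_comm, mul_div_assoc', div_eq_iff hpos.ne']
  norm_cast
  rw [sum_powersetCard_descFactorial_card_inter hDS m r]
  ring

theorem sum_powersetCard_card_inter_sub_pow_four_eq {S D : Finset α} (hDS : D ⊆ S) (m : ℕ)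
    (hs : 4 ≤ S.card) :
    ∑ T ∈ S.powersetCard m, (((T ∩ D).card : ℝ) - (m / S.card : ℝ) * D.card) ^ 4
      = S.card.choose m * hypergeometricFourthCentralMoment S.card D.card m := by
  have h1 := sum_powersetCard_cast_descFactorial_card_inter hDS m (r := 1) (by omega)
  have h2 := sum_powersetCard_cast_descFactorial_card_inter hDS m (r := 2) (by omega)
  have h3 := sum_powersetCard_cast_descFactorial_card_inter hDS m (r := 3) (by omega)
  have h4 := sum_powersetCard_cast_descFactorial_card_inter hDS m (r := 4) hs
  simp only [Nat.cast_descFactorial_eq_prod_range, prod_range_succ, prod_range_zero, Nat.cast_zero,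
    sub_zero, one_mul, Nat.cast_one, Nat.cast_ofNat] at h1 h2 h3 h4
  set μ : ℝ := m / S.card * D.card
  calc ∑ T ∈ S.powersetCard m, (((T ∩ D).card : ℝ) - μ) ^ 4
      = ∑ T ∈ S.powersetCard m, (((T ∩ D).card : ℝ) * ((T ∩ D).card - 1) * ((T ∩ D).card - 2)
            * ((T ∩ D).card - 3)
          + (6 - 4 * μ) * (((T ∩ D).card : ℝ) * ((T ∩ D).card - 1) * ((T ∩ D).card - 2))
          + (7 - 12 * μ + 6 * μ ^ 2) * (((T ∩ D).card : ℝ) * ((T ∩ D).card - 1))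
          + (1 - 4 * μ + 6 * μ ^ 2 - 4 * μ ^ 3) * ((T ∩ D).card : ℝ) + μ ^ 4) :=
        sum_congr rfl fun _ _ => by ring
    _ = S.card.choose m * hypergeometricFourthCentralMoment S.card D.card m := by
        simp only [sum_add_distrib, ← mul_sum, sum_const, card_powersetCard, nsmul_eq_mul]
        rw [h1, h2, h3, h4, hypergeometricFourthCentralMoment]
        ring

theorem sum_powersetCard_card_inter_sub_pow_four_le {S D : Finset α} (hDS : D ⊆ S) (m : ℕ) :
    ∑ T ∈ S.powersetCard m, (((T ∩ D).card : ℝ) - (m / S.card : ℝ) * D.card) ^ 4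
      ≤ (S.card : ℝ) ^ 2 * S.card.choose m := by
  rcases lt_or_ge S.card m with hm | hm
  · simp [powersetCard_eq_empty.2 hm, Nat.choose_eq_zero_of_lt hm]
  rcases lt_or_ge S.card 4 with hs | hs
  · -- the closed form needs `4 ≤ |S|`; below that, `(|S| / 4) ^ 4 ≤ |S| ^ 2` pointwise
    calc ∑ T ∈ S.powersetCard m, (((T ∩ D).card : ℝ) - (m / S.card : ℝ) * D.card) ^ 4
        ≤ ∑ _T ∈ S.powersetCard m, (S.card : ℝ) ^ 2 := by
          refine sum_le_sum fun T hT => ?_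
          obtain ⟨hTS, rfl⟩ := mem_powersetCard.1 hT
          have hs' : (S.card : ℝ) ≤ 3 := by exact_mod_cast Nat.le_of_lt_succ hs
          rw [← Even.pow_abs (by decide)]
          calc _ ≤ ((S.card : ℝ) / 4) ^ 4 :=
                pow_le_pow_left₀ (abs_nonneg _) (abs_card_inter_sub_le hTS hDS) 4
            _ ≤ (S.card : ℝ) ^ 2 := by
                have : (S.card : ℝ) ^ 2 ≤ 9 := by nlinarith
                nlinarith [mul_le_mul_of_nonneg_left this (sq_nonneg (S.card : ℝ))]
      _ = (S.card : ℝ) ^ 2 * S.card.choose m := by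
          rw [sum_const, card_powersetCard, nsmul_eq_mul, mul_comm]
  rw [sum_powersetCard_card_inter_sub_pow_four_eq hDS m hs, mul_comm]
  gcongr
  exact hypergeometricFourthCentralMoment_le (by exact_mod_cast hs) (Nat.cast_nonneg _)
    (by exact_mod_cast card_le_card hDS) (Nat.cast_nonneg _) (by exact_mod_cast hm)

theorem exists_mem_powersetCard_forall_abs_card_inter_sub_le {ι : Type*} [Fintype ι]
    {S : Finset α} (D : ι → Finset α) (hD : ∀ i, D i ⊆ S) {m : ℕ} (hm : m ≤ S.card) {δ : ℝ}
    (hδ : 0 ≤ δ) (hι : Fintype.card ι * (S.card : ℝ) ^ 2 ≤ δ ^ 4) :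
    ∃ T ∈ S.powersetCard m, ∀ i,
      |((T ∩ D i).card : ℝ) - (m / S.card : ℝ) * (D i).card| ≤ δ := by
  set dev : Finset α → ι → ℝ :=
    fun T i => ((T ∩ D i).card : ℝ) - (m / S.card : ℝ) * (D i).card
  have hsum : ∑ T ∈ S.powersetCard m, ∑ i, dev T i ^ 4
      ≤ ∑ _T ∈ S.powersetCard m, Fintype.card ι * (S.card : ℝ) ^ 2 := by
    rw [sum_comm]
    calc ∑ i, ∑ T ∈ S.powersetCard m, dev T i ^ 4
        ≤ ∑ _i : ι, (S.card : ℝ) ^ 2 * S.card.choose m :=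
          sum_le_sum fun i _ => sum_powersetCard_card_inter_sub_pow_four_le (hD i) m
      _ = ∑ _T ∈ S.powersetCard m, Fintype.card ι * (S.card : ℝ) ^ 2 := by
          simp only [sum_const, card_univ, card_powersetCard, nsmul_eq_mul]
          ring
  obtain ⟨T, hT, hTsum⟩ := exists_le_of_sum_le (powersetCard_nonempty.2 hm) hsum
  refine ⟨T, hT, fun i => ?_⟩
  have hi : |dev T i| ^ 4 ≤ δ ^ 4 := by
    rw [Even.pow_abs (by decide)]
    exact (single_le_sum (fun j _ => by positivity) (mem_univ i)).trans (hTsum.trans hι)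
  exact (pow_le_pow_iff_left₀ (abs_nonneg _) hδ (by norm_num)).1 hi

end Finset

theorem Set.Finite.exists_subset_ncard_eq_forall_abs_ncard_inter_sub_le {α ι : Type*}
    [Fintype ι] {S : Set α} (hS : S.Finite) (N : ι → Set α) {m : ℕ} (hm : m ≤ S.ncard) {δ : ℝ}
    (hδ : 0 ≤ δ) (hι : Fintype.card ι * (S.ncard : ℝ) ^ 2 ≤ δ ^ 4) :
    ∃ T ⊆ S, T.ncard = m ∧ ∀ i,
      |((T ∩ N i).ncard : ℝ) - (m / S.ncard : ℝ) * (S ∩ N i).ncard| ≤ δ := by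
  classical
  lift S to Finset α using hS
  rw [ncard_coe_finset] at hm hι ⊢
  obtain ⟨T, hT, hdev⟩ := S.exists_mem_powersetCard_forall_abs_card_inter_sub_le
    (fun i => S.filter (· ∈ N i)) (fun i => Finset.filter_subset _ _) hm hδ hι
  obtain ⟨hTS, rfl⟩ := Finset.mem_powersetCard.1 hT
  refine ⟨T, by exact_mod_cast hTS, ncard_coe_finset T, fun i => ?_⟩
  have hTN : (T : Set α) ∩ N i = ↑(T ∩ S.filter (· ∈ N i)) := by
    rw [Finset.inter_filter, Finset.inter_eq_left.2 hTS, Finset.coe_filter]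
    rfl
  have hSN : (S : Set α) ∩ N i = ↑(S.filter (· ∈ N i)) := by
    rw [Finset.coe_filter]
    rfl
  rw [hTN, hSN, ncard_coe_finset, ncard_coe_finset]
  exact hdev i

theorem Set.abs_ncard_diff_inter_sub_eq {α : Type*} {S T : Set α} (hS : S.Finite) (hTS : T ⊆ S)
    (N : Set α) (K : ℝ) :
    |(((S \ T) ∩ N).ncard : ℝ) - (1 - K) * (S ∩ N).ncard|
      = |((T ∩ N).ncard : ℝ) - K * (S ∩ N).ncard| := by
  have hsplit := ncard_sdiff_add_ncard_of_subset (inter_subset_inter_left N hTS)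
    (hS.inter_of_left N)
  rw [← inter_sdiff_distrib_right] at hsplit
  rw [← abs_neg]
  congr 1
  rw [← hsplit]
  push_cast
  ring

/-- For every `ε > 0` there exists an integer `n₀` such that the following
holds. Let `G` be a digraph on `n ≥ n₀` vertices, let `S ⊆ V(G)`, let `m` be a positive
integer with `m ≤ |S|`, and set `K = m/|S|`. Then there exists `T ⊆ S` with `|T| = m` such
that for every vertex `v`, the four quantities `d⁺(v,T)`, `d⁻(v,T)`, `d⁺(v,S∖T)`,
`d⁻(v,S∖T)` differ from `K·d⁺(v,S)`, `K·d⁻(v,S)`, `(1−K)·d⁺(v,S)`, `(1−K)·d⁻(v,S)`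
respectively by at most `εn`. -/
theorem stmt14 (ε : ℝ) (hε : 0 < ε) :
    ∃ n₀ : ℕ, ∀ (n : ℕ) (V : Type) [Fintype V] (G : V → V → Prop),
      n₀ ≤ n → Fintype.card V = n → Irreflexive G →
      ∀ (S : Set V) (m : ℕ), 0 < m → m ≤ S.ncard →
      ∃ T : Set V, T ⊆ S ∧ T.ncard = m ∧
        ∀ v : V,
          |(outdegOn G v T : ℝ) - (m / S.ncard : ℝ) * (outdegOn G v S : ℝ)| ≤ ε * n ∧
          |(indegOn G v T : ℝ) - (m / S.ncard : ℝ) * (indegOn G v S : ℝ)| ≤ ε * n ∧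
          |(outdegOn G v (S \ T) : ℝ) - (1 - (m / S.ncard : ℝ)) * (outdegOn G v S : ℝ)| ≤ ε * n ∧
          |(indegOn G v (S \ T) : ℝ) - (1 - (m / S.ncard : ℝ)) * (indegOn G v S : ℝ)| ≤ ε * n := by
  refine ⟨⌈2 / ε ^ 4⌉₊, fun n V _ G hn hcard _ S m _ hm => ?_⟩
  have hεn : 2 ≤ ε ^ 4 * n := (div_le_iff₀' (by positivity)).1 (Nat.ceil_le.1 hn)
  have hSn : (S.ncard : ℝ) ≤ n := by
    rw [← hcard, ← Nat.card_eq_fintype_card]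
    exact_mod_cast S.ncard_le_card
  -- `outdegOn G v X` is `(X ∩ N (.inl v)).ncard` and `indegOn G v X` is `(X ∩ N (.inr v)).ncard`
  let N : V ⊕ V → Set V := Sum.elim (fun v => {u | G v u}) (fun v => {u | G u v})
  have hN : Fintype.card (V ⊕ V) * (S.ncard : ℝ) ^ 2 ≤ (ε * n) ^ 4 := by
    rw [Fintype.card_sum, hcard]
    calc ((n + n : ℕ) : ℝ) * S.ncard ^ 2 ≤ (n + n) * (n : ℝ) ^ 2 := by push_cast; gcongr
      _ = 2 * (n : ℝ) ^ 3 := by ring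
      _ ≤ ε ^ 4 * n * n ^ 3 := by gcongr
      _ = (ε * n) ^ 4 := by ring
  obtain ⟨T, hTS, hTm, hT⟩ :=
    S.toFinite.exists_subset_ncard_eq_forall_abs_ncard_inter_sub_le N hm (by positivity) hN
  refine ⟨T, hTS, hTm, fun v => ⟨hT (.inl v), hT (.inr v), ?_, ?_⟩⟩
  · exact (Set.abs_ncard_diff_inter_sub_eq S.toFinite hTS _ _).trans_le (hT (.inl v))
  · exact (Set.abs_ncard_diff_inter_sub_eq S.toFinite hTS _ _).trans_le (hT (.inr v))
end

section
/- Let G be an oriented graph whose vertex set is partitioned into pairwise disjoint sets B, C, D with C nonempty, such that every arc of G either has its tail in D and its head in B, or its tail in B and its head in C, or its tail in C and its head in D, or both endpoints in C. If G contains an antidirected Hamilton cycle, then |C| ≥ |B| + |D|. -/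
open Set

/-- Let `G` be an oriented graph whose vertex set is partitioned into
pairwise disjoint sets `B, C, D` with `C` nonempty, such that every arc of `G` either has
its tail in `D` and head in `B`, or tail in `B` and head in `C`, or tail in `C` and head
in `D`, or both endpoints in `C`. If `G` contains an antidirected Hamilton cycle, then
`|C| ≥ |B| + |D|`. -/
theorem stmt19 {V : Type*} [Fintype V] (G : V → V → Prop) (hG : IsOrientedGraph G)
    (B C D : Set V) (hC : C.Nonempty)
    (hunion : B ∪ C ∪ D = Set.univ)
    (hBC : Disjoint B C) (hBD : Disjoint B D) (hCD : Disjoint C D)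
    (harcs : ∀ u v : V, G u v →
      (u ∈ D ∧ v ∈ B) ∨ (u ∈ B ∧ v ∈ C) ∨ (u ∈ C ∧ v ∈ D) ∨ (u ∈ C ∧ v ∈ C))
    (hham : HasAntidirectedHamCycle (Fintype.card V) G) :
    B.ncard + D.ncard ≤ C.ncard := by
  classical
  obtain ⟨f, hf⟩ := hham
  have hne : Nonempty V := ⟨hC.some⟩
  haveI : NeZero (Fintype.card V) := ⟨Fintype.card_ne_zero⟩
  -- sink predicate
  have hxor : ∀ i : ZMod (Fintype.card V),
      Xor' (G (f i) (f (i + 1))) (G (f (i + 1)) (f i)) := fun i => (hf i).1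
  have halt : ∀ i : ZMod (Fintype.card V),
      G (f i) (f (i + 1)) ↔ G (f (i + 2)) (f (i + 1)) := fun i => (hf i).2
  -- ¬ sink i ↔ forward arc at i
  have hPnot : ∀ i : ZMod (Fintype.card V),
      ¬ G (f (i + 1)) (f i) ↔ G (f i) (f (i + 1)) := by
    intro i
    rcases hxor i with ⟨h1, h2⟩ | ⟨h1, h2⟩
    · exact ⟨fun _ => h1, fun _ => h2⟩
    · exact ⟨fun h => absurd h1 h, fun h => absurd h h2⟩
  -- sink alternation
  have hPsucc : ∀ i : ZMod (Fintype.card V),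
      G (f (i + 1 + 1)) (f (i + 1)) ↔ ¬ G (f (i + 1)) (f i) := by
    intro i
    have h2 : i + 1 + 1 = i + 2 := by ring
    rw [h2, ← halt i]
    exact (hPnot i).symm
  set Q : ZMod (Fintype.card V) → Prop :=
    fun i => (f i ∈ B ∧ G (f (i + 1)) (f i)) ∨ (f i ∈ D ∧ ¬ G (f (i + 1)) (f i)) with hQ
  have hstep : ∀ i, Q i → Q (i + 1) := by
    intro i hi
    rcases hi with ⟨hB', hP⟩ | ⟨hD', hP⟩
    · -- f i ∈ B sink; f (i+1) ∈ D and not sink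
      have hD1 : f (i + 1) ∈ D := by
        rcases harcs _ _ hP with ⟨h, _⟩ | ⟨_, h⟩ | ⟨_, h⟩ | ⟨_, h⟩
        · exact h
        · exact absurd hB' (Set.disjoint_right.mp hBC h)
        · exact absurd h (Set.disjoint_left.mp hBD hB')
        · exact absurd hB' (Set.disjoint_right.mp hBC h)
      exact Or.inr ⟨hD1, fun h => ((hPsucc i).mp h) hP⟩
    · -- f i ∈ D source; f (i+1) ∈ B and sink
      have hg : G (f i) (f (i + 1)) := (hPnot i).mp hP
      have hB1 : f (i + 1) ∈ B := by
        rcases harcs _ _ hg with ⟨_, h⟩ | ⟨h, _⟩ | ⟨h, _⟩ | ⟨h, _⟩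
        · exact h
        · exact absurd hD' (Set.disjoint_left.mp hBD h)
        · exact absurd hD' (Set.disjoint_left.mp hCD h)
        · exact absurd hD' (Set.disjoint_left.mp hCD h)
      exact Or.inl ⟨hB1, (hPsucc i).mpr hP⟩
  have hnoQ : ∀ i, ¬ Q i := by
    intro i hi
    have hall : ∀ k : ℕ, Q (i + (k : ZMod (Fintype.card V))) := by
      intro k
      induction k with
      | zero => simpa using hi
      | succ m ih =>
        have := hstep _ ih
        have he : i + ((m : ZMod (Fintype.card V)) + 1) = i + (m : ZMod (Fintype.card V)) + 1 := by
          ring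
        rw [Nat.cast_succ, he]
        exact this
    obtain ⟨c, hc⟩ := hC
    obtain ⟨k, hk⟩ := ZMod.natCast_zmod_surjective (n := Fintype.card V) (f.symm c - i)
    have hQc := hall k
    rw [hk] at hQc
    have hic : i + (f.symm c - i) = f.symm c := by ring
    rw [hic] at hQc
    rcases hQc with ⟨h, _⟩ | ⟨h, _⟩
    · rw [f.apply_symm_apply] at h
      exact Set.disjoint_left.mp hBC h hc
    · rw [f.apply_symm_apply] at h
      exact Set.disjoint_right.mp hCD h hc
  -- the map v ↦ f (f.symm v + 1) sends B ∪ D into C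
  have hmap : ∀ v ∈ B ∪ D, f (f.symm v + 1) ∈ C := by
    intro v hv
    set i := f.symm v with hi
    have hfi : f i = v := f.apply_symm_apply v
    rcases hv with hvB | hvD
    · have hP : ¬ G (f (i + 1)) (f i) := by
        intro h
        exact hnoQ i (Or.inl ⟨hfi ▸ hvB, h⟩)
      have hg : G (f i) (f (i + 1)) := (hPnot i).mp hP
      rcases harcs _ _ hg with ⟨h, _⟩ | ⟨_, h⟩ | ⟨h, _⟩ | ⟨h, _⟩
      · exact absurd h (Set.disjoint_left.mp hBD (hfi ▸ hvB))
      · exact h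
      · exact absurd h (Set.disjoint_left.mp hBC (hfi ▸ hvB))
      · exact absurd h (Set.disjoint_left.mp hBC (hfi ▸ hvB))
    · have hP : G (f (i + 1)) (f i) := by
        by_contra h
        exact hnoQ i (Or.inr ⟨hfi ▸ hvD, h⟩)
      rcases harcs _ _ hP with ⟨_, h⟩ | ⟨_, h⟩ | ⟨h, _⟩ | ⟨_, h⟩
      · exact absurd h (Set.disjoint_right.mp hBD (hfi ▸ hvD))
      · exact absurd h (Set.disjoint_left.mp (hCD.symm) (hfi ▸ hvD))
      · exact h
      · exact absurd h (Set.disjoint_left.mp (hCD.symm) (hfi ▸ hvD))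
  have hinj : Set.InjOn (fun v => f (f.symm v + 1)) (B ∪ D) := by
    intro a _ b _ h
    have h1 : f.symm a + 1 = f.symm b + 1 := f.injective h
    have h2 : f.symm a = f.symm b := by
      have := add_right_cancel h1
      exact this
    exact f.symm.injective h2
  have hle : (B ∪ D).ncard ≤ C.ncard :=
    Set.ncard_le_ncard_of_injOn _ hmap hinj (Set.toFinite C)
  rwa [Set.ncard_union_eq hBD (Set.toFinite B) (Set.toFinite D)] at hle
end
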